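/- arXiv:2404.19019 — 9 statements merged into one kernel-verified Lean document; each statement's English description precedes it below -/
import Mathlib

section
/- Let e be an edge of T. Then S(e) = ∅ if and only if e is the edge of maximum rank in T. Consequently, the SLD parent p(e) is defined for every edge of T except the unique maximum-rank edge. -/
/- Single tree setting: `G` is a finite tree with injective edge ranks `r`.
`edgesBetween G e f` is the set of edges strictly between edges `e` and `f`
on the unique tree path connecting them (an edge `g ∉ {e,f}` lies on this path
iff it belongs to every walk containing both `e` and `f`). -/

open SimpleGraph

variable {V : Type*}

/-- The set of edges lying strictly between edges `e` and `f` on the tree path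
connecting them (excluding `e` and `f`). -/
def edgesBetween (G : SimpleGraph V) (e f : Sym2 V) : Set (Sym2 V) :=
  {g | g ∈ G.edgeSet ∧ g ≠ e ∧ g ≠ f ∧
    ∀ (a b : V) (w : G.Walk a b), e ∈ w.edges → f ∈ w.edges → g ∈ w.edges}

/-- `f` is an adjacent superior of `e`: `r e < r f` and every edge `g` on the
path between `e` and `f` satisfies `r g < r e`. -/
def AdjSup (G : SimpleGraph V) (r : Sym2 V → ℕ) (e f : Sym2 V) : Prop :=
  f ∈ G.edgeSet ∧ r e < r f ∧ ∀ g ∈ edgesBetween G e f, r g < r e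

/-- `f` is an adjacent inferior of `e`: `r f < r e` and every edge `g` on the
path between `e` and `f` satisfies `r g < r e`. -/
def AdjInf (G : SimpleGraph V) (r : Sym2 V → ℕ) (e f : Sym2 V) : Prop :=
  f ∈ G.edgeSet ∧ r f < r e ∧ ∀ g ∈ edgesBetween G e f, r g < r e

/-- `f` is the SLD parent of `e`: the minimum-rank adjacent superior of `e`. -/
def IsParent (G : SimpleGraph V) (r : Sym2 V → ℕ) (e f : Sym2 V) : Prop :=
  AdjSup G r e f ∧ ∀ g, AdjSup G r e g → r f ≤ r g

/-- The spine of `e`: the set of edges obtained by iterating the SLD parent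
function starting from `e` (including `e` itself). -/
def spine (G : SimpleGraph V) (r : Sym2 V → ℕ) (e : Sym2 V) : Set (Sym2 V) :=
  {f | Relation.ReflTransGen (IsParent G r) e f}

lemma List.mem_tail_or_mem_dropLast {α : Type*} {l : List α} {e f g : α}
    (he : e ∈ l) (hf : f ∈ l) (hg : g ∈ l) (hgf : g ≠ f) :
    (e ∈ l.tail ∧ (f ∈ l.tail ∨ g ∈ l.tail)) ∨
      (e ∈ l.dropLast ∧ (f ∈ l.dropLast ∨ g ∈ l.dropLast)) := by
  induction l using List.reverseRecOn with
  | nil => simp at he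
  | append_singleton t y _ =>
    cases t with
    | nil => grind
    | cons x t => grind

namespace SimpleGraph

variable {G : SimpleGraph V}

lemma Walk.exists_shorter_of_mem_edges {a b : V} (w : G.Walk a b) {e f g : Sym2 V}
    (he : e ∈ w.edges) (hf : f ∈ w.edges) (hg : g ∈ w.edges) (hgf : g ≠ f) :
    ∃ (c d : V) (w' : G.Walk c d), w'.length < w.length ∧ e ∈ w'.edges ∧
      (f ∈ w'.edges ∨ g ∈ w'.edges) := by
  have hpos : 0 < w.length := w.length_edges ▸ List.length_pos_of_mem he
  rcases List.mem_tail_or_mem_dropLast he hf hg hgf with h | h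
  · exact ⟨_, _, w.tail, by rw [Walk.length_tail]; omega, by simpa [Walk.edges_tail] using h⟩
  · exact ⟨_, _, w.dropLast, by rw [Walk.length_dropLast]; omega,
      by simpa [Walk.edges_dropLast] using h⟩

lemma Connected.exists_walk_mem_edges_of_mem_edgeSet (hc : G.Connected) {e f : Sym2 V}
    (he : e ∈ G.edgeSet) (hf : f ∈ G.edgeSet) :
    ∃ (a b : V) (w : G.Walk a b), e ∈ w.edges ∧ f ∈ w.edges := by
  induction e using Sym2.ind with | _ u v =>
  induction f using Sym2.ind with | _ x y =>
  rw [mem_edgeSet] at he hf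
  obtain ⟨p⟩ := hc.preconnected v x
  exact ⟨u, y, .cons he (p.concat hf), by simp, by simp⟩

end SimpleGraph

variable {G : SimpleGraph V} {r : Sym2 V → ℕ} {e : Sym2 V}

/- Either `f` is itself an adjacent superior of `e`, or some edge `g` between them outranks `e`;
then `g` lies on the walk too, and dropping the first or last edge of the walk keeps `e` together with `f`
or `g`, so we recurse on a shorter walk. -/
theorem exists_adjSup_of_mem_edges (hr : Set.InjOn r G.edgeSet) (he : e ∈ G.edgeSet)
    {a b : V} (w : G.Walk a b) {f : Sym2 V} (hew : e ∈ w.edges) (hfw : f ∈ w.edges)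
    (hrf : r e < r f) : ∃ f', AdjSup G r e f' := by
  by_cases hbetween : ∀ g ∈ edgesBetween G e f, r g < r e
  · exact ⟨f, w.edges_subset_edgeSet hfw, hrf, hbetween⟩
  push Not at hbetween
  obtain ⟨g, ⟨hgE, hge, hgf, hgw⟩, hrg⟩ := hbetween
  have hrg : r e < r g := hrg.lt_of_ne fun h => hge (hr hgE he h.symm)
  obtain ⟨c, d, w', hlen, hew', hfw' | hgw'⟩ :=
    w.exists_shorter_of_mem_edges hew hfw (hgw a b w hew hfw) hgf
  · exact exists_adjSup_of_mem_edges hr he w' hew' hfw' hrf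
  · exact exists_adjSup_of_mem_edges hr he w' hew' hgw' hrg
termination_by w.length

theorem exists_adjSup_iff (hc : G.Connected) (hr : Set.InjOn r G.edgeSet)
    (he : e ∈ G.edgeSet) : (∃ f, AdjSup G r e f) ↔ ∃ f ∈ G.edgeSet, r e < r f := by
  constructor
  · rintro ⟨f, hf, hrf, -⟩
    exact ⟨f, hf, hrf⟩
  · rintro ⟨f, hf, hrf⟩
    obtain ⟨a, b, w, hew, hfw⟩ := hc.exists_walk_mem_edges_of_mem_edgeSet he hf
    exact exists_adjSup_of_mem_edges hr he w hew hfw hrf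

theorem exists_isParent_iff : (∃ f, IsParent G r e f) ↔ ∃ f, AdjSup G r e f := by
  constructor
  · rintro ⟨f, hf, -⟩
    exact ⟨f, hf⟩
  · rintro ⟨f, hf⟩
    obtain ⟨p, hp, hmin⟩ := (InvImage.wf r wellFounded_lt).has_min {g | AdjSup G r e g} ⟨f, hf⟩
    exact ⟨p, hp, fun g hg => not_lt.mp (hmin g hg)⟩

theorem stmt0_general (G : SimpleGraph V) (hT : G.IsTree)
    (r : Sym2 V → ℕ) (hr : Set.InjOn r G.edgeSet)
    (e : Sym2 V) (he : e ∈ G.edgeSet) :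
    ({f | AdjSup G r e f} = ∅ ↔ ∀ f ∈ G.edgeSet, r f ≤ r e) ∧
    ((∃ f, IsParent G r e f) ↔ ¬ ∀ f ∈ G.edgeSet, r f ≤ r e) := by
  have hexists := exists_adjSup_iff hT.connected hr he
  have hS : {f | AdjSup G r e f} = ∅ ↔ ¬ ∃ f, AdjSup G r e f :=
    Set.eq_empty_iff_forall_notMem.trans not_exists.symm
  rw [hS, exists_isParent_iff, hexists]
  push Not
  exact ⟨Iff.rfl, Iff.rfl⟩

/-- `S(e) = ∅` iff `e` is the maximum-rank edge of `T`; consequently the SLD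
parent `p(e)` is defined for every edge except the unique maximum-rank edge. -/
theorem stmt0 [Fintype V] (G : SimpleGraph V) (hT : G.IsTree)
    (r : Sym2 V → ℕ) (hr : Set.InjOn r G.edgeSet)
    (hne : G.edgeSet.Nonempty)
    (e : Sym2 V) (he : e ∈ G.edgeSet) :
    ({f | AdjSup G r e f} = ∅ ↔ ∀ f ∈ G.edgeSet, r f ≤ r e) ∧
    ((∃ f, IsParent G r e f) ↔ ¬ ∀ f ∈ G.edgeSet, r f ≤ r e) :=
  stmt0_general G hT r hr e he
end

section
/- For every edge e of T, the maximum-rank edge of T belongs to spine(e). In other words, iterating the SLD parent function p from any edge strictly increases rank at each step and terminates at the maximum-rank edge, so the SLD parent function makes E a rooted tree whose root is the maximum-rank edge. -/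
/- Single tree setting: `G` is a finite tree with injective edge ranks `r`.
`edgesBetween G e f` is the set of edges strictly between edges `e` and `f`
on the unique tree path connecting them (an edge `g ∉ {e,f}` lies on this path
iff it belongs to every walk containing both `e` and `f`). -/

open SimpleGraph

variable {V : Type*}

private lemma adjSup_aux (G : SimpleGraph V) (r : Sym2 V → ℕ)
    (hr : Set.InjOn r G.edgeSet) (e : Sym2 V) (he : e ∈ G.edgeSet) :
    ∀ {v t : V} (w : G.Walk v t), (∃ f ∈ w.edges, r e < r f) →
    ∃ f, r e < r f ∧ ∃ (d : V) (w' : G.Walk v d), f ∈ w'.edges ∧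
      ∀ g ∈ w'.edges, g ≠ f → (g = e ∨ r g < r e) := by
  intro v t w
  induction w with
  | nil => rintro ⟨f, hf, _⟩; simp at hf
  | @cons a b c h w ih =>
    rintro ⟨f, hf, hrf⟩
    by_cases hg0 : r e < r s(a, b)
    · refine ⟨s(a,b), hg0, b, .cons h .nil, by simp, ?_⟩
      intro g hg hgf
      simp only [SimpleGraph.Walk.edges_cons, SimpleGraph.Walk.edges_nil,
        List.mem_cons, List.not_mem_nil, or_false] at hg
      exact absurd hg hgf
    · have hfw : f ∈ w.edges := by
        rcases List.mem_cons.mp (by simpa using hf) with h1 | h1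
        · exact absurd (h1 ▸ hrf) hg0
        · exact h1
      obtain ⟨f', hf', d, w', hfw', hall⟩ := ih ⟨f, hfw, hrf⟩
      refine ⟨f', hf', d, .cons h w', by simp [hfw'], ?_⟩
      intro g hg hgf
      rcases List.mem_cons.mp (by simpa using hg) with h1 | h1
      · by_cases hge : g = e
        · exact Or.inl hge
        · refine Or.inr (lt_of_le_of_ne (h1 ▸ not_lt.mp hg0) ?_)
          exact fun hc => hge (hr (h1 ▸ G.mem_edgeSet.mpr h) he hc)
      · exact hall g h1 hgf

private lemma exists_adjSup (G : SimpleGraph V) (hc : G.Connected)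
    (r : Sym2 V → ℕ) (hr : Set.InjOn r G.edgeSet)
    {e emax : Sym2 V} (he : e ∈ G.edgeSet) (hemax : emax ∈ G.edgeSet)
    (hlt : r e < r emax) : ∃ f, AdjSup G r e f := by
  induction e using Sym2.ind with
  | _ u v =>
  induction emax using Sym2.ind with
  | _ x y =>
  have hadj : G.Adj u v := G.mem_edgeSet.mp he
  have hadj' : G.Adj x y := G.mem_edgeSet.mp hemax
  obtain ⟨p⟩ := hc.preconnected v x
  set w : G.Walk v y := p.append (SimpleGraph.Walk.cons hadj' SimpleGraph.Walk.nil) with hw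
  have hmem : s(x,y) ∈ w.edges := by
    rw [hw, SimpleGraph.Walk.edges_append]
    simp
  obtain ⟨f, hf, d, w', hfw', hall⟩ := adjSup_aux G r hr s(u,v) he w ⟨s(x,y), hmem, hlt⟩
  set W : G.Walk u d := SimpleGraph.Walk.cons hadj w' with hW
  refine ⟨f, SimpleGraph.Walk.edges_subset_edgeSet w' hfw', hf, ?_⟩
  rintro g ⟨hgE, hge, hgf, hgw⟩
  have hgW : g ∈ W.edges := by
    refine hgw u d W ?_ ?_
    · rw [hW]; simp
    · rw [hW]; simp [hfw']
  have hgw' : g ∈ w'.edges := by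
    rw [hW, SimpleGraph.Walk.edges_cons] at hgW
    rcases List.mem_cons.mp hgW with h1 | h1
    · exact absurd h1 hge
    · exact h1
  rcases hall g hgw' hgf with h1 | h1
  · exact absurd h1 hge
  · exact h1

/-- Iterating the SLD parent function strictly increases rank at each step, and
for every edge `e`, the maximum-rank edge of `T` belongs to `spine e`; hence
the parent function makes the edge set a rooted tree whose root is the
maximum-rank edge. -/
theorem stmt1 [Fintype V] (G : SimpleGraph V) (hT : G.IsTree)
    (r : Sym2 V → ℕ) (hr : Set.InjOn r G.edgeSet)
    (hne : G.edgeSet.Nonempty) :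
    (∀ e f : Sym2 V, IsParent G r e f → r e < r f) ∧
    (∀ e ∈ G.edgeSet, ∀ emax ∈ G.edgeSet,
      (∀ f ∈ G.edgeSet, r f ≤ r emax) → emax ∈ spine G r e) := by
  refine ⟨fun e f hp => hp.1.2.1, ?_⟩
  intro e he emax hemax hmax
  have main : ∀ n, ∀ e ∈ G.edgeSet, r emax - r e ≤ n → emax ∈ spine G r e := by
    intro n
    induction n with
    | zero =>
      intro e he h0
      have : e = emax := hr he hemax (le_antisymm (hmax e he) (by omega))
      subst this
      exact Relation.ReflTransGen.refl
    | succ n ih =>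
      intro e he h
      by_cases heq : e = emax
      · subst heq; exact Relation.ReflTransGen.refl
      · have hlt : r e < r emax :=
          lt_of_le_of_ne (hmax e he) (fun hc => heq (hr he hemax hc))
        have hS : {f | AdjSup G r e f}.Nonempty :=
          exists_adjSup G hT.isConnected r hr he hemax hlt
        obtain ⟨f, hfS, hfmin⟩ :=
          Set.exists_min_image {f | AdjSup G r e f} r (Set.toFinite _) hS
        have hparent : IsParent G r e f := ⟨hfS, fun g hg => hfmin g hg⟩
        have hfE : f ∈ G.edgeSet := hfS.1
        have h1 : r e < r f := hfS.2.1
        have h2 : r f ≤ r emax := hmax f hfE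
        exact Relation.ReflTransGen.head hparent (ih f hfE (by omega))
  exact main _ e he le_rfl
end

section
/- For every edge e = (u,v) of T, the edge set I^u(e) spans a connected subgraph of T containing the vertex u: for every f ∈ I^u(e), every edge lying on the tree path from f to u also belongs to I^u(e). The same holds for I^v(e) and v. -/
/- Single tree setting: `G` is a finite tree with injective edge ranks `r`.
`edgesBetween G e f` is the set of edges strictly between edges `e` and `f`
on the unique tree path connecting them (an edge `g ∉ {e,f}` lies on this path
iff it belongs to every walk containing both `e` and `f`). -/

open SimpleGraph

variable {V : Type*}

/-- Edge `f` lies on the `u`-side of edge `e` (strictly closer to `u`):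
`f` is reachable from `u` by a walk avoiding `e`. -/
def OnSide (G : SimpleGraph V) (e : Sym2 V) (u : V) (f : Sym2 V) : Prop :=
  ∃ (x : V) (w : G.Walk u x), f ∈ w.edges ∧ e ∉ w.edges

/-- Edges lying on the tree path from edge `f` to vertex `u`, excluding `f`
itself: the edges `g ≠ f` belonging to every walk from `u` containing `f`. -/
def edgesBetweenEV (G : SimpleGraph V) (f : Sym2 V) (u : V) : Set (Sym2 V) :=
  {g | g ∈ G.edgeSet ∧ g ≠ f ∧ ∀ (x : V) (w : G.Walk u x), f ∈ w.edges → g ∈ w.edges}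

/-- The edge set `I^u(e)` spans a connected subgraph of `T` containing `u`:
for every `f ∈ I^u(e)`, every edge on the tree path from `f` to `u` also
belongs to `I^u(e)` (and likewise for `I^v(e)` and `v`, by symmetry of `u,v`). -/
theorem stmt2 [Fintype V] (G : SimpleGraph V) (hT : G.IsTree)
    (r : Sym2 V → ℕ) (hr : Set.InjOn r G.edgeSet)
    (u v : V) (huv : G.Adj u v)
    (f : Sym2 V) (hfInf : AdjInf G r s(u, v) f) (hfSide : OnSide G s(u, v) u f)
    (g : Sym2 V) (hg : g ∈ edgesBetweenEV G f u) :
    AdjInf G r s(u, v) g ∧ OnSide G s(u, v) u g := by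
  obtain ⟨hgE, hgf, hgAll⟩ := hg
  obtain ⟨x, w, hfw, hew⟩ := hfSide
  have hgw : g ∈ w.edges := hgAll x w hfw
  have hge : g ≠ s(u, v) := fun h => hew (h ▸ hgw)
  have key : ∀ (a b : V) (p : G.Walk a b),
      s(u, v) ∈ p.edges → f ∈ p.edges → g ∈ p.edges := by
    intro a b p hep hfp
    haveI : DecidableEq V := Classical.decEq V
    have hu : u ∈ p.support := p.fst_mem_support_of_mem_edges hep
    have hed : p.edges = (p.takeUntil u hu).edges ++ (p.dropUntil u hu).edges := by
      rw [← Walk.edges_append, p.take_spec hu]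
    rw [hed] at hfp ⊢
    rcases List.mem_append.mp hfp with h | h
    · refine List.mem_append.mpr (Or.inl ?_)
      have := hgAll a (p.takeUntil u hu).reverse (by simpa using h)
      simpa using this
    · exact List.mem_append.mpr (Or.inr (hgAll b (p.dropUntil u hu) h))
  obtain ⟨hfE, hfr, hfB⟩ := hfInf
  have hgr : r g < r s(u, v) := hfB g ⟨hgE, hge, hgf, key⟩
  refine ⟨⟨hgE, hgr, ?_⟩, ⟨x, w, hgw, hew⟩⟩
  intro h hh
  obtain ⟨hhE, hhe, hhg, hhAll⟩ := hh
  by_cases hhf : h = f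
  · exact hhf ▸ hfr
  · exact hfB h ⟨hhE, hhe, hhf, fun a b p hep hfp => hhAll a b p hep (key a b p hep hfp)⟩
end

section
/- (Descendant characterization of the SLD; Lemma 3.2.) For distinct edges e and f of T, e ∈ spine(f) if and only if f ∈ I(e). Consequently, for e = (u,v), the strict descendants of node e in the SLD that lie on the u-side of e are exactly I^u(e), and those on the v-side are exactly I^v(e). -/
/- Single tree setting: `G` is a finite tree with injective edge ranks `r`.
`edgesBetween G e f` is the set of edges strictly between edges `e` and `f`
on the unique tree path connecting them (an edge `g ∉ {e,f}` lies on this path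
iff it belongs to every walk containing both `e` and `f`). -/

open SimpleGraph

variable {V : Type*}

/-!
Edges "between" two edges behave like the interior of a tree interval: an edge between `e` and `f`
is `m`, or lies between `e` and `m`, or between `m` and `f`. Hence ranks propagate along parent
chains: if `f` reaches `e` by iterating the parent map, every edge met on the way (and every edge
between consecutive ones) ranks below `e`, so `f` is an adjacent inferior of `e`.

Conversely, let `f` be an adjacent inferior of `e` and follow the tree path from an endpoint of `f`
to the far endpoint of `e`. Its first edge `g` ranked above `f` is an adjacent superior of `f`
with `r g ≤ r e`, so the parent `p(f)` has rank at most `r e` and is either `e` or again an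
adjacent inferior of `e`. Induction on `r e - r f` puts `e` on the spine of `f`.
-/

namespace SimpleGraph

variable {G : SimpleGraph V}

namespace Walk

lemma exists_walk_edges_eq_union {a b c d x : V} (w₁ : G.Walk a b) (w₂ : G.Walk c d)
    (h₁ : x ∈ w₁.support) (h₂ : x ∈ w₂.support) :
    ∃ W : G.Walk a d, ∀ g, g ∈ W.edges ↔ g ∈ w₁.edges ∨ g ∈ w₂.edges := by
  classical
  refine ⟨w₁.append ((w₁.dropUntil x h₁).reverse.append
    ((w₂.takeUntil x h₂).reverse.append w₂)), fun g => ⟨?_, ?_⟩⟩ <;>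
    simp only [edges_append, edges_reverse, List.mem_append, List.mem_reverse]
  · rintro (h | h | h | h)
    · exact .inl h
    · exact .inl (w₁.edges_dropUntil_subset_edges h₁ h)
    · exact .inr (w₂.edges_takeUntil_subset_edges h₂ h)
    · exact .inr h
  · rintro (h | h)
    · exact .inl h
    · exact .inr (.inr (.inr h))

lemma exists_first_edge {u v : V} (w : G.Walk u v) (p : Sym2 V → Prop)
    (hp : ∃ g ∈ w.edges, p g) :
    ∃ (s t : V) (w₁ : G.Walk u s) (h : G.Adj s t) (w₂ : G.Walk t v),
      p s(s, t) ∧ (∀ g ∈ w₁.edges, ¬ p g) ∧ w = w₁.append (cons h w₂) := by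
  induction w with
  | nil => simp at hp
  | @cons u v z h w ih =>
    by_cases hu : p s(u, v)
    · exact ⟨u, v, nil, h, w, hu, by simp, rfl⟩
    · obtain ⟨s, t, w₁, h', w₂, hst, hw₁, rfl⟩ := ih (by simpa [hu] using hp)
      exact ⟨s, t, cons h w₁, h', w₂, hst, by simpa [hu] using hw₁, rfl⟩

end Walk

lemma IsAcyclic.edges_subset_of_mem_support (hG : G.IsAcyclic) {x y a b : V} {P : G.Walk x y}
    (hP : P.IsPath) (w : G.Walk a b) (hx : x ∈ w.support) (hy : y ∈ w.support) :
    P.edges ⊆ w.edges := by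
  classical
  let q : G.Walk x y := (w.takeUntil x hx).reverse.append (w.takeUntil y hy)
  obtain rfl : P = q.bypass := congrArg Subtype.val <|
    (hG.subsingleton_path x y).elim ⟨P, hP⟩ ⟨q.bypass, q.bypass_isPath⟩
  intro g hg
  have hgq := q.edges_bypass_subset_edges hg
  simp only [q, Walk.edges_append, Walk.edges_reverse, List.mem_append, List.mem_reverse] at hgq
  rcases hgq with h | h <;> exact w.edges_takeUntil_subset_edges _ h

lemma IsTree.exists_isPath_mem_edges (hG : G.IsTree) (a : V) {e : Sym2 V}
    (he : e ∈ G.edgeSet) :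
    ∃ y ∈ e, ∃ P : G.Walk a y, P.IsPath ∧ e ∈ P.edges := by
  induction e using Sym2.ind with | _ c d =>
  rw [mem_edgeSet] at he
  obtain ⟨p, hp⟩ := (hG.existsUnique_path a c).exists
  obtain ⟨q, hq⟩ := (hG.existsUnique_path a d).exists
  by_cases hc : c ∈ q.support
  · refine ⟨d, Sym2.mem_mk_right c d, q, hq, ?_⟩
    rw [hG.isAcyclic.path_concat hp hq he hc]
    simp [Walk.edges_concat]
  · have hd := hG.isAcyclic.mem_support_of_ne_mem_support_of_adj_of_isPath hp hq he hc
    refine ⟨c, Sym2.mem_mk_left c d, p, hp, ?_⟩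
    rw [hG.isAcyclic.path_concat hq hp he.symm hd]
    simp [Walk.edges_concat, Sym2.eq_swap]

end SimpleGraph

section SingleLinkage

variable {G : SimpleGraph V} {r : Sym2 V → ℕ} {e f g : Sym2 V}

lemma mem_edgesBetween_comm : g ∈ edgesBetween G e f ↔ g ∈ edgesBetween G f e :=
  ⟨fun ⟨hg, hge, hgf, h⟩ => ⟨hg, hgf, hge, fun a b w hf he => h a b w he hf⟩,
    fun ⟨hg, hgf, hge, h⟩ => ⟨hg, hge, hgf, fun a b w he hf => h a b w hf he⟩⟩

lemma mem_edgesBetween_trichotomy (m : Sym2 V) (hg : g ∈ edgesBetween G e f) :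
    g = m ∨ g ∈ edgesBetween G e m ∨ g ∈ edgesBetween G m f := by
  obtain ⟨hgE, hge, hgf, hg⟩ := hg
  by_contra! ⟨hgm, hem, hmf⟩
  simp only [edgesBetween, Set.mem_ofPred_eq, not_and, not_forall, exists_prop] at hem hmf
  obtain ⟨a, b, w₁, hew₁, hmw₁, hgw₁⟩ := hem hgE hge hgm
  obtain ⟨c, d, w₂, hmw₂, hfw₂, hgw₂⟩ := hmf hgE hgm hgf
  obtain ⟨W, hW⟩ := w₁.exists_walk_edges_eq_union w₂
    (w₁.mem_support_of_mem_edges hmw₁ m.out_fst_mem)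
    (w₂.mem_support_of_mem_edges hmw₂ m.out_fst_mem)
  rcases (hW g).1 (hg _ _ W ((hW e).2 (.inl hew₁)) ((hW f).2 (.inr hfw₂))) with h | h
  exacts [hgw₁ h, hgw₂ h]

lemma rank_lt_of_mem_edgesBetween_of_mid {m : Sym2 V} {n : ℕ} (hm : r m < n)
    (h₁ : ∀ g ∈ edgesBetween G e m, r g < n) (h₂ : ∀ g ∈ edgesBetween G m f, r g < n) :
    ∀ g ∈ edgesBetween G e f, r g < n := fun g hg => by
  rcases mem_edgesBetween_trichotomy m hg with rfl | h | h
  exacts [hm, h₁ g h, h₂ g h]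

lemma SimpleGraph.IsAcyclic.mem_edgesBetween_of_mem_edges (hG : G.IsAcyclic) {x y : V}
    {P : G.Walk x y} (hP : P.IsPath) (hx : x ∈ f) (hy : y ∈ e) (hg : g ∈ P.edges)
    (hgf : g ≠ f) (hge : g ≠ e) : g ∈ edgesBetween G f e :=
  ⟨P.edges_subset_edgeSet hg, hgf, hge, fun _ _ w hf he =>
    hG.edges_subset_of_mem_support hP w (w.mem_support_of_mem_edges hf hx)
      (w.mem_support_of_mem_edges he hy) hg⟩

lemma AdjSup.adjInf (hf : f ∈ G.edgeSet) (h : AdjSup G r f g) : AdjInf G r g f :=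
  ⟨hf, h.2.1, fun m hm => (h.2.2 m (mem_edgesBetween_comm.1 hm)).trans h.2.1⟩

lemma AdjInf.trans_adjSup (h₁ : AdjInf G r e f) (h₂ : AdjSup G r e g) : AdjInf G r g f :=
  ⟨h₁.1, h₁.2.1.trans h₂.2.1, rank_lt_of_mem_edgesBetween_of_mid h₂.2.1
    (fun m hm => (h₂.2.2 m (mem_edgesBetween_comm.1 hm)).trans h₂.2.1)
    (fun m hm => (h₁.2.2 m hm).trans h₂.2.1)⟩

lemma exists_isParent_le (h : AdjSup G r f g) : ∃ p, IsParent G r f p ∧ r p ≤ r g := by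
  obtain ⟨p, hp, hmin⟩ := exists_minimalFor_of_wellFoundedLT (AdjSup G r f) r ⟨g, h⟩
  have hle : ∀ q, AdjSup G r f q → r p ≤ r q := fun q hq => (le_total _ _).elim id (hmin hq)
  exact ⟨p, ⟨hp, hle⟩, hle g h⟩

lemma eq_or_adjInf_of_reflTransGen_isParent (hf : f ∈ G.edgeSet)
    (h : Relation.ReflTransGen (IsParent G r) f e) : f = e ∨ AdjInf G r e f := by
  induction h with
  | refl => exact .inl rfl
  | tail _ hbc ih =>
    rcases ih with rfl | hinf
    exacts [.inr (hbc.1.adjInf hf), .inr (hinf.trans_adjSup hbc.1)]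

lemma exists_isParent_of_adjInf (hT : G.IsTree) (hr : Set.InjOn r G.edgeSet)
    (he : e ∈ G.edgeSet) (h : AdjInf G r e f) :
    ∃ p, IsParent G r f p ∧ (p = e ∨ AdjInf G r e p) := by
  obtain ⟨hfE, hfe, hbetween⟩ := h
  induction f using Sym2.ind with | _ a b =>
  obtain ⟨y, hy, P, hP, heP⟩ := hT.exists_isPath_mem_edges a he
  obtain ⟨s, t, w₁, hst, w₂, hfg, hw₁, rfl⟩ :=
    P.exists_first_edge (r s(a, b) < r ·) ⟨e, heP, hfe⟩
  have hsup : AdjSup G r s(a, b) s(s, t) := by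
    refine ⟨hst, hfg, fun m ⟨hmE, hmf, hmg, hm⟩ => ?_⟩
    have hmW := hm _ _ (.cons (G.adj_symm hfE) (w₁.concat hst)) (by simp)
      (by simp [Walk.edges_concat])
    replace hmW : m ∈ w₁.edges := by
      simpa [Walk.edges_concat, Sym2.eq_swap, hmf, hmg] using hmW
    exact lt_of_le_of_ne (not_lt.1 (hw₁ m hmW)) fun h => hmf (hr hmE hfE h)
  have hge : r s(s, t) ≤ r e := by
    by_cases hge : s(s, t) = e
    · exact (congrArg r hge).le
    · exact (hbetween _ (mem_edgesBetween_comm.1 (hT.isAcyclic.mem_edgesBetween_of_mem_edges hP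
        (Sym2.mem_mk_left a b) hy (by simp) (ne_of_apply_ne r hfg.ne') hge))).le
  obtain ⟨p, hp, hpg⟩ := exists_isParent_le hsup
  refine ⟨p, hp, or_iff_not_imp_left.2 fun hpe => ⟨hp.1.1, ?_, ?_⟩⟩
  · exact lt_of_le_of_ne (hpg.trans hge) fun h => hpe (hr hp.1.1 he h)
  · exact rank_lt_of_mem_edgesBetween_of_mid hfe hbetween
      fun m hm => (hp.1.2.2 m hm).trans hfe

lemma reflTransGen_isParent_of_adjInf (hT : G.IsTree) (hr : Set.InjOn r G.edgeSet)
    (he : e ∈ G.edgeSet) (h : AdjInf G r e f) : Relation.ReflTransGen (IsParent G r) f e := by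
  induction hn : r e - r f using Nat.strong_induction_on generalizing f with | _ n ih =>
  obtain ⟨p, hp, rfl | hpe⟩ := exists_isParent_of_adjInf hT hr he h
  · exact .single hp
  · have : r f < r p := hp.1.2.1
    have : r p < r e := hpe.2.1
    exact .head hp (ih _ (by omega) hpe rfl)

end SingleLinkage

theorem stmt3_general (G : SimpleGraph V) (hT : G.IsTree)
    (r : Sym2 V → ℕ) (hr : Set.InjOn r G.edgeSet) :
    (∀ e f : Sym2 V, e ∈ G.edgeSet → f ∈ G.edgeSet → e ≠ f →
      (e ∈ spine G r f ↔ AdjInf G r e f)) ∧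
    (∀ u v : V, G.Adj u v → ∀ f ∈ G.edgeSet, f ≠ s(u, v) →
      ((s(u, v) ∈ spine G r f ∧ OnSide G s(u, v) u f) ↔
        (AdjInf G r s(u, v) f ∧ OnSide G s(u, v) u f))) := by
  have spine_iff : ∀ e f : Sym2 V, e ∈ G.edgeSet → f ∈ G.edgeSet → e ≠ f →
      (e ∈ spine G r f ↔ AdjInf G r e f) := fun e f he hf hef =>
    ⟨fun h => (eq_or_adjInf_of_reflTransGen_isParent hf h).resolve_left hef.symm,
      reflTransGen_isParent_of_adjInf hT hr he⟩
  exact ⟨spine_iff, fun u v huv f hf hfu => and_congr_left' (spine_iff _ _ huv hf hfu.symm)⟩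

/-- Descendant characterization of the SLD: for distinct edges `e, f`,
`e ∈ spine f` iff `f ∈ I(e)`; consequently, for `e = (u,v)` the strict
descendants of node `e` lying on the `u`-side are exactly `I^u(e)`. -/
theorem stmt3 [Fintype V] (G : SimpleGraph V) (hT : G.IsTree)
    (r : Sym2 V → ℕ) (hr : Set.InjOn r G.edgeSet) :
    (∀ e f : Sym2 V, e ∈ G.edgeSet → f ∈ G.edgeSet → e ≠ f →
      (e ∈ spine G r f ↔ AdjInf G r e f)) ∧
    (∀ u v : V, G.Adj u v → ∀ f ∈ G.edgeSet, f ≠ s(u, v) →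
      ((s(u, v) ∈ spine G r f ∧ OnSide G s(u, v) u f) ↔
        (AdjInf G r s(u, v) f ∧ OnSide G s(u, v) u f))) :=
  stmt3_general G hT r hr
end

section
/- (Lemma 3.3.) Let e_1, e_2, …, e_d be the edges of T incident to a vertex u, listed in increasing order of rank. Then e_i ∈ spine(e_1) for all 2 ≤ i ≤ d. -/
/- Single tree setting: `G` is a finite tree with injective edge ranks `r`.
`edgesBetween G e f` is the set of edges strictly between edges `e` and `f`
on the unique tree path connecting them (an edge `g ∉ {e,f}` lies on this path
iff it belongs to every walk containing both `e` and `f`). -/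

open SimpleGraph

variable {V : Type*}

/-- Auxiliary: two walks each containing a common edge `e` can be combined into
a single walk whose edge set is exactly the union of their edge sets. -/
lemma join_walks {G : SimpleGraph V} {e : Sym2 V} {a b c d : V}
    (W1 : G.Walk a b) (W2 : G.Walk c d) (h1e : e ∈ W1.edges) (h2e : e ∈ W2.edges) :
    ∃ (a' b' : V) (W : G.Walk a' b'),
      (∀ h, h ∈ W.edges → h ∈ W1.edges ∨ h ∈ W2.edges) ∧
      (∀ h, h ∈ W1.edges → h ∈ W.edges) ∧ (∀ h, h ∈ W2.edges → h ∈ W.edges) := by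
  classical
  induction e using Sym2.inductionOn with
  | hf x y =>
    have hx1 : x ∈ W1.support := SimpleGraph.Walk.fst_mem_support_of_mem_edges W1 h1e
    have hx2 : x ∈ W2.support := SimpleGraph.Walk.fst_mem_support_of_mem_edges W2 h2e
    refine ⟨a, d, W1.append (((W1.dropUntil x hx1).reverse).append
      (((W2.takeUntil x hx2).reverse).append W2)), ?_, ?_, ?_⟩
    · intro h hh
      simp only [SimpleGraph.Walk.edges_append, SimpleGraph.Walk.edges_reverse,
        List.mem_append, List.mem_reverse] at hh
      rcases hh with (hh | hh | hh | hh)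
      · exact Or.inl hh
      · exact Or.inl (SimpleGraph.Walk.edges_dropUntil_subset W1 hx1 hh)
      · exact Or.inr (SimpleGraph.Walk.edges_takeUntil_subset W2 hx2 hh)
      · exact Or.inr hh
    · intro h hh
      simp only [SimpleGraph.Walk.edges_append, List.mem_append]
      tauto
    · intro h hh
      simp only [SimpleGraph.Walk.edges_append, List.mem_append]
      tauto

/-- Auxiliary: if `g` and `f` are both adjacent superiors of `e`, then every
edge strictly between `g` and `f` has rank less than `r g`. -/
lemma between_of_two_sups {G : SimpleGraph V} {r : Sym2 V → ℕ} {e g f : Sym2 V}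
    (hgS : AdjSup G r e g) (hfS : AdjSup G r e f) :
    ∀ h ∈ edgesBetween G g f, r h < r g := by
  rintro h ⟨hhE, hhg, hhf, hall⟩
  by_cases hhe : h = e
  · subst hhe; exact hgS.2.1
  -- show h lies between e and g, or between e and f
  have key : h ∈ edgesBetween G e g ∨ h ∈ edgesBetween G e f := by
    by_contra hcon
    push_neg at hcon
    obtain ⟨h1, h2⟩ := hcon
    simp only [edgesBetween, Set.mem_setOf_eq, not_and, not_forall] at h1 h2
    obtain ⟨a, b, W1, he1, hg1, hnh1⟩ := h1 hhE hhe hhg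
    obtain ⟨c, d, W2, he2, hf2, hnh2⟩ := h2 hhE hhe hhf
    obtain ⟨a', b', W, hWsub, hW1, hW2⟩ := join_walks W1 W2 he1 he2
    have := hall a' b' W (hW1 g hg1) (hW2 f hf2)
    rcases hWsub h this with h' | h'
    · exact hnh1 h'
    · exact hnh2 h'
  rcases key with hk | hk
  · exact lt_trans (hgS.2.2 h hk) hgS.2.1
  · exact lt_trans (hfS.2.2 h hk) hgS.2.1

/-- Auxiliary: every adjacent superior of `e` lies on the spine of `e`. -/
lemma adjsup_mem_spine {G : SimpleGraph V} {r : Sym2 V → ℕ}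
    (hr : Set.InjOn r G.edgeSet) :
    ∀ (n : ℕ) (e f : Sym2 V), e ∈ G.edgeSet → r f - r e ≤ n →
      AdjSup G r e f → f ∈ spine G r e := by
  intro n
  induction n with
  | zero =>
    intro e f _ hle hS
    have := hS.2.1
    omega
  | succ n ih =>
    intro e f heE hle hS
    -- find the minimum-rank adjacent superior g of e
    have hne : (r '' {g | AdjSup G r e g}).Nonempty := ⟨r f, f, hS, rfl⟩
    obtain ⟨g, hgS, hgr⟩ := Nat.sInf_mem hne
    have hgmin : ∀ g', AdjSup G r e g' → r g ≤ r g' := by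
      intro g' hg'
      rw [hgr]
      exact Nat.sInf_le ⟨g', hg', rfl⟩
    have hpar : IsParent G r e g := ⟨hgS, hgmin⟩
    by_cases hgf : g = f
    · subst hgf
      exact Relation.ReflTransGen.single hpar
    · have hglt : r g < r f := by
        have hle' := hgmin f hS
        rcases lt_or_eq_of_le hle' with h | h
        · exact h
        · exact absurd (hr hgS.1 hS.1 h) hgf
      have hSgf : AdjSup G r g f :=
        ⟨hS.1, hglt, between_of_two_sups hgS hS⟩
      have hrec : f ∈ spine G r g := by
        apply ih g f hgS.1 _ hSgf
        have := hgS.2.1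
        have := hS.2.1
        omega
      exact Relation.ReflTransGen.head hpar hrec

/-- Lemma 3.3: if `e1` is the minimum-rank edge incident to a vertex `u`, then
every edge incident to `u` belongs to `spine e1`. -/
theorem stmt4 [Fintype V] (G : SimpleGraph V) (hT : G.IsTree)
    (r : Sym2 V → ℕ) (hr : Set.InjOn r G.edgeSet)
    (u : V) (e1 : Sym2 V) (he1 : e1 ∈ G.edgeSet) (hu : u ∈ e1)
    (hmin : ∀ f ∈ G.edgeSet, u ∈ f → r e1 ≤ r f) :
    ∀ f ∈ G.edgeSet, u ∈ f → f ∈ spine G r e1 := by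
  classical
  intro f hf hfu
  by_cases hfe : f = e1
  · subst hfe; exact Relation.ReflTransGen.refl
  · have hlt : r e1 < r f := by
      rcases lt_or_eq_of_le (hmin f hf hfu) with h | h
      · exact h
      · exact absurd (hr he1 hf h) (Ne.symm hfe)
    have hS : AdjSup G r e1 f := by
      refine ⟨hf, hlt, ?_⟩
      rintro g ⟨hgE, hge, hgf, hall⟩
      exfalso
      -- build a two-edge walk containing e1 and f
      set v := Sym2.Mem.other hu with hv
      set w := Sym2.Mem.other hfu with hw
      have hv' : s(u, v) = e1 := Sym2.other_spec hu
      have hw' : s(u, w) = f := Sym2.other_spec hfu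
      have hadj1 : G.Adj u v := by rw [← SimpleGraph.mem_edgeSet, hv']; exact he1
      have hadj2 : G.Adj u w := by rw [← SimpleGraph.mem_edgeSet, hw']; exact hf
      let W : G.Walk v w := SimpleGraph.Walk.cons hadj1.symm (SimpleGraph.Walk.cons hadj2 SimpleGraph.Walk.nil)
      have hWedges : W.edges = [s(v, u), s(u, w)] := rfl
      have he1W : e1 ∈ W.edges := by
        rw [hWedges, List.mem_cons, List.mem_singleton]
        left; rw [Sym2.eq_swap]; exact hv'.symm
      have hfW : f ∈ W.edges := by
        rw [hWedges, List.mem_cons, List.mem_singleton]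
        right; exact hw'.symm
      have := hall v w W he1W hfW
      rw [hWedges, List.mem_cons, List.mem_singleton] at this
      rcases this with h' | h'
      · exact hge (by rw [h', Sym2.eq_swap]; exact hv')
      · exact hgf (by rw [h']; exact hw')
    exact adjsup_mem_spine hr (r f - r e1) e1 f he1 le_rfl hS
end

section
/- (Core of the comparison lower bound, Lemma 3.1.) Suppose T is a star: a center vertex c adjacent to all other n−1 vertices, each of degree 1. Let e_1, e_2, …, e_{n−1} be the edges of T listed in increasing order of rank. Then p(e_i) = e_{i+1} for every 1 ≤ i ≤ n−2, and e_{n−1} has no adjacent superior. Hence the SLD of a star is a path listing the edges in sorted rank order, so computing the SLD of a star determines the sorted order of the edge ranks. -/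
/- Single tree setting: `G` is a finite tree with injective edge ranks `r`.
`edgesBetween G e f` is the set of edges strictly between edges `e` and `f`
on the unique tree path connecting them (an edge `g ∉ {e,f}` lies on this path
iff it belongs to every walk containing both `e` and `f`). -/

open SimpleGraph

variable {V : Type*}

lemma star_edge (G : SimpleGraph V) (c : V)
    (hstar : ∀ a b : V, G.Adj a b ↔ (a = c ∧ b ≠ c) ∨ (b = c ∧ a ≠ c))
    {e : Sym2 V} (he : e ∈ G.edgeSet) : ∃ a, a ≠ c ∧ e = s(c, a) := by
  induction e using Sym2.ind with
  | _ x y =>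
    rw [SimpleGraph.mem_edgeSet, hstar] at he
    rcases he with ⟨hx, hy⟩ | ⟨hy, hx⟩
    · exact ⟨y, hy, by rw [hx]⟩
    · exact ⟨x, hx, by rw [hy, Sym2.eq_swap]⟩

lemma star_between_empty (G : SimpleGraph V) (c : V)
    (hstar : ∀ a b : V, G.Adj a b ↔ (a = c ∧ b ≠ c) ∨ (b = c ∧ a ≠ c))
    {e f : Sym2 V} (he : e ∈ G.edgeSet) (hf : f ∈ G.edgeSet) :
    edgesBetween G e f = ∅ := by
  obtain ⟨a, ha, rfl⟩ := star_edge G c hstar he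
  obtain ⟨b, hb, rfl⟩ := star_edge G c hstar hf
  ext g
  simp only [Set.mem_empty_iff_false, iff_false]
  rintro ⟨hg, hge, hgf, hall⟩
  have hac : G.Adj a c := by rw [hstar]; right; exact ⟨rfl, ha⟩
  have hcb : G.Adj c b := by rw [hstar]; left; exact ⟨rfl, hb⟩
  have hw := hall a b (SimpleGraph.Walk.cons hac (SimpleGraph.Walk.cons hcb SimpleGraph.Walk.nil))
    (by simp [SimpleGraph.Walk.edges_cons, Sym2.eq_swap])
    (by simp [SimpleGraph.Walk.edges_cons])
  simp only [SimpleGraph.Walk.edges_cons, SimpleGraph.Walk.edges_nil, List.mem_cons,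
    List.not_mem_nil, or_false] at hw
  rcases hw with h | h
  · exact hge (h.trans (Sym2.eq_swap))
  · exact hgf h

/-- On a star with center `c`, the SLD parent of an edge is exactly its
successor in increasing rank order (so the SLD lists the edges in sorted
order), and the maximum-rank edge has no adjacent superior. -/
theorem stmt5 [Fintype V] (G : SimpleGraph V) (c : V)
    (hcard : 2 ≤ Fintype.card V)
    (hstar : ∀ a b : V, G.Adj a b ↔ (a = c ∧ b ≠ c) ∨ (b = c ∧ a ≠ c))
    (r : Sym2 V → ℕ) (hr : Set.InjOn r G.edgeSet) :
    (∀ e ∈ G.edgeSet, ∀ f ∈ G.edgeSet,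
      (IsParent G r e f ↔ (r e < r f ∧ ∀ g ∈ G.edgeSet, r e < r g → r f ≤ r g))) ∧
    (∀ e ∈ G.edgeSet, (∀ g ∈ G.edgeSet, r g ≤ r e) → ∀ f, ¬ AdjSup G r e f) := by
  have hAdj : ∀ e ∈ G.edgeSet, ∀ f, AdjSup G r e f ↔ (f ∈ G.edgeSet ∧ r e < r f) := by
    intro e he f
    constructor
    · rintro ⟨hf, hlt, _⟩; exact ⟨hf, hlt⟩
    · rintro ⟨hf, hlt⟩
      exact ⟨hf, hlt, by rw [star_between_empty G c hstar he hf]; simp⟩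
  constructor
  · intro e he f hf
    constructor
    · rintro ⟨hsup, hmin⟩
      refine ⟨((hAdj e he f).1 hsup).2, fun g hg hlt => hmin g ((hAdj e he g).2 ⟨hg, hlt⟩)⟩
    · rintro ⟨hlt, hmin⟩
      refine ⟨(hAdj e he f).2 ⟨hf, hlt⟩, fun g hg => ?_⟩
      obtain ⟨hg', hlt'⟩ := (hAdj e he g).1 hg
      exact hmin g hg' hlt'
  · intro e he hmax f hsup
    obtain ⟨hf, hlt⟩ := (hAdj e he f).1 hsup
    exact absurd (hmax f hf) (not_le.2 hlt)
end

section
/- (Lemma 3.4.) Every edge f ∈ E1 with f ∉ spine1(e1*) is protected under the merge: the SLD parent of f computed in G equals the SLD parent of f computed in G1, i.e., p(f) = p1(f) (in particular, p(f) is defined iff p1(f) is). Symmetrically, every f ∈ E2 with f ∉ spine2(e2*) satisfies p(f) = p2(f). -/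
/-!
For edges of `G1`, betweenness in `G = G1 ⊔ G2` agrees with betweenness in `G1`: a walk of `G`
retracts onto a walk of `G1` by collapsing the vertices of `G2` to the cut vertex `v`, keeping
every edge of `G1` and adding none. So the adjacent superiors of `f ∈ E1` that lie in `E1` are the
same in `G` and in `G1`, and it remains to show that no `g ∈ E2` is an adjacent superior of `f`
in `G` when `f ∉ spine1(e1*)`.

Every walk through `f` and `g` passes through `v`. Hence the edges of `G1` between `e1*` and `f`,
and, when `v ∉ f`, the first edge of the path from `v` to `f`, all lie between `f` and `g`. If `g`
were an adjacent superior of `f` they would all be ranked below `f`, so by the minimality of `e1*`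
at `v` we would get `r e1* < r f` with every edge between `e1*` and `f` ranked below `f`. In a
tree this forces `f ∈ spine1(e1*)`, by induction on the rank gap: either the highest edge between
`e` and `f` that outranks `e` splits the gap, or `f` is an adjacent superior of `e` and the parent
of `e` splits it.
-/

open SimpleGraph

variable {V : Type*}

lemma List.mem_of_reverse_cons_eq_cons {α : Type*} {a b : α} {l l' : List α}
    (h : (a :: l).reverse = a :: l') (hb : b ∈ l) : a ∈ l := by
  induction l using List.reverseRecOn with
  | nil => simp at hb
  | append_singleton l c _ => simp_all

lemma exists_min_image_of_wellFoundedLT {α β : Type*} [LinearOrder β] [WellFoundedLT β]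
    (f : α → β) {s : Set α} (hs : s.Nonempty) : ∃ x ∈ s, ∀ y ∈ s, f x ≤ f y :=
  ⟨_, Function.argminOn_mem f s hs, fun _ hy => Function.argminOn_le f s hy⟩

namespace SimpleGraph.Walk

variable {G : SimpleGraph V} [DecidableEq V]

lemma exists_walk_of_mem_support {a b x y : V} (w : G.Walk a b) (hx : x ∈ w.support)
    (hy : y ∈ w.support) :
    ∃ w' : G.Walk x y, (∀ e ∈ w'.edges, e ∈ w.edges) ∧ ∀ z ∈ w'.support, z ∈ w.support := by
  refine ⟨(w.takeUntil x hx).reverse.append (w.takeUntil y hy), fun e he => ?_, fun z hz => ?_⟩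
  · simp only [edges_append, edges_reverse, List.mem_append, List.mem_reverse] at he
    exact he.elim (w.edges_takeUntil_subset_edges hx ·) (w.edges_takeUntil_subset_edges hy ·)
  · simp only [mem_support_append_iff, support_reverse, List.mem_reverse] at hz
    exact hz.elim (w.support_takeUntil_subset_support hx ·)
      (w.support_takeUntil_subset_support hy ·)

lemma exists_walk_edges_iff_of_mem_support {a b c d x : V} (w₁ : G.Walk a b) (w₂ : G.Walk c d)
    (h₁ : x ∈ w₁.support) (h₂ : x ∈ w₂.support) :
    ∃ (a' b' : V) (w : G.Walk a' b'), ∀ e, e ∈ w.edges ↔ e ∈ w₁.edges ∨ e ∈ w₂.edges := by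
  refine ⟨a, d, (w₁.append (w₁.dropUntil x h₁).reverse).append
    ((w₂.takeUntil x h₂).reverse.append w₂), fun e => ?_⟩
  have hd := w₁.edges_dropUntil_subset_edges h₁
  have ht := w₂.edges_takeUntil_subset_edges h₂
  simp only [edges_append, edges_reverse, List.mem_append, List.mem_reverse]
  constructor
  · rintro ((h | h) | h | h)
    exacts [.inl h, .inl (hd h), .inr (ht h), .inr h]
  · rintro (h | h)
    exacts [.inl (.inl h), .inr (.inr h)]

end SimpleGraph.Walk

namespace SimpleGraph

variable {G : SimpleGraph V}

lemma mem_support_of_mem_edgeSet {e : Sym2 V} (he : e ∈ G.edgeSet) {x : V} (hx : x ∈ e) :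
    x ∈ G.support := by
  induction e using Sym2.ind with
  | h a b =>
    rcases Sym2.mem_iff.mp hx with rfl | rfl
    exacts [Adj.mem_support_left he, Adj.mem_support_right he]

lemma isAcyclic_of_isAcyclic_induce_support (h : (G.induce G.support).IsAcyclic) :
    G.IsAcyclic := by
  intro u c hc
  have hs : ∀ x ∈ c.support, x ∈ G.support :=
    fun _ hx => mem_support_of_mem_walk_support c hc.not_nil hx
  have hinj : Function.Injective (Embedding.induce (G := G) G.support).toHom :=
    (Embedding.induce (G := G) G.support).injective
  refine h (c.induce G.support hs) ?_
  rwa [← Walk.isCycle_map_iff_of_injective hinj, Walk.map_induce]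

lemma reachable_of_connected_induce_support (h : (G.induce G.support).Connected) {x y : V}
    (hx : x ∈ G.support) (hy : y ∈ G.support) : G.Reachable x y :=
  (h.preconnected ⟨x, hx⟩ ⟨y, hy⟩).map (Embedding.induce G.support).toHom

lemma exists_walk_mem_edges_of_connected_induce_support (h : (G.induce G.support).Connected)
    {e f : Sym2 V} (he : e ∈ G.edgeSet) (hf : f ∈ G.edgeSet) :
    ∃ (a b : V) (w : G.Walk a b), e ∈ w.edges ∧ f ∈ w.edges := by
  induction e using Sym2.ind with | h a₁ a₂ => ?_
  induction f using Sym2.ind with | h b₁ b₂ => ?_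
  rw [mem_edgeSet] at he hf
  obtain ⟨w⟩ := reachable_of_connected_induce_support h he.mem_support_right hf.mem_support_left
  exact ⟨a₁, b₂, .cons he (w.append hf.toWalk), by simp, by simp [Adj.toWalk]⟩

end SimpleGraph

section Betweenness

variable {G : SimpleGraph V}

lemma edgesBetween_subset_insert_union (e : Sym2 V) {p f : Sym2 V} :
    edgesBetween G p f ⊆ insert e (edgesBetween G e p ∪ edgesBetween G e f) := by
  classical
  rintro x ⟨hx, hxp, hxf, hpf⟩
  by_contra! hc
  simp only [Set.mem_insert_iff, Set.mem_union, not_or] at hc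
  obtain ⟨hxe, hep, hef⟩ := hc
  simp only [edgesBetween, Set.mem_ofPred_eq, not_and, not_forall, exists_prop] at hep hef
  obtain ⟨a₁, b₁, w₁, he₁, hp₁, hx₁⟩ := hep hx hxe hxp
  obtain ⟨a₂, b₂, w₂, he₂, hf₂, hx₂⟩ := hef hx hxe hxf
  obtain ⟨_, _, w, hw⟩ := Walk.exists_walk_edges_iff_of_mem_support w₁ w₂
    (Walk.mem_support_of_mem_edges he₁ e.out_fst_mem)
    (Walk.mem_support_of_mem_edges he₂ e.out_fst_mem)
  have := hpf _ _ w ((hw p).2 (.inl hp₁)) ((hw f).2 (.inr hf₂))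
  exact ((hw x).1 this).elim hx₁ hx₂

lemma notMem_edgesBetween_of_mem_edgesBetween {e f m : Sym2 V}
    (hw : ∃ (a b : V) (w : G.Walk a b), e ∈ w.edges ∧ f ∈ w.edges)
    (hm : m ∈ edgesBetween G e f) : f ∉ edgesBetween G e m := by
  intro hf
  have hall : ∀ a b (w : G.Walk a b), e ∈ w.edges → f ∈ w.edges ∨ m ∈ w.edges →
      f ∈ w.edges ∧ m ∈ w.edges := fun a b w he => by
    rintro (h | h)
    exacts [⟨h, hm.2.2.2 a b w he h⟩, ⟨hf.2.2.2 a b w he h, h⟩]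
  -- A shortest walk containing `e` and one of `f`, `m` contains all three; minimality makes `e`
  -- both its first and its last edge, and forbids a second occurrence of `e`.
  suffices ∀ n a b (w : G.Walk a b), w.length = n → e ∈ w.edges →
      f ∈ w.edges ∨ m ∈ w.edges → False by
    obtain ⟨a, b, w, he, hf⟩ := hw
    exact this _ a b w rfl he (.inl hf)
  intro n
  induction n using Nat.strong_induction_on with | _ n ih => ?_
  have hcons : ∀ a b (w : G.Walk a b), w.length = n → e ∈ w.edges →
      f ∈ w.edges ∨ m ∈ w.edges → ∃ L, w.edges = e :: L ∧ e ∉ L := by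
    rintro a b (_ | @⟨_, c, _, h, w⟩) hn he hfm
    · simp at he
    · have hlt : w.length < n := by simp only [Walk.length_cons] at hn; omega
      have hf' : f ∈ (Walk.cons h w).edges := (hall _ _ _ he hfm).1
      have hm' : m ∈ (Walk.cons h w).edges := (hall _ _ _ he hfm).2
      simp only [Walk.edges_cons, List.mem_cons] at he hf' hm'
      by_cases hfirst : e = s(a, c)
      · refine ⟨w.edges, by rw [Walk.edges_cons, hfirst], fun he' => ih _ hlt _ _ w rfl he' ?_⟩
        exact .inl (hf'.resolve_left (hfirst ▸ hf.2.1))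
      · refine (ih _ hlt _ _ w rfl (he.resolve_left hfirst) ?_).elim
        by_cases hfirst' : f = s(a, c)
        · exact .inr (hm'.resolve_left (hfirst' ▸ hm.2.2.1))
        · exact .inl (hf'.resolve_left hfirst')
  intro a b w hn he hfm
  obtain ⟨L, hL, heL⟩ := hcons a b w hn he hfm
  obtain ⟨L', hL', -⟩ := hcons b a w.reverse (by simpa using hn) (by simpa using he)
    (by simpa using hfm)
  rw [Walk.edges_reverse, hL] at hL'
  have hfL : f ∈ L := by
    have := (hall a b w he hfm).1
    rw [hL, List.mem_cons] at this
    exact this.resolve_left hf.2.1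
  exact heL (List.mem_of_reverse_cons_eq_cons hL' hfL)

lemma edgesBetween_subset_of_mem {e f x : Sym2 V}
    (hw : ∃ (a b : V) (w : G.Walk a b), e ∈ w.edges ∧ f ∈ w.edges)
    (hx : x ∈ edgesBetween G e f) : edgesBetween G e x ⊆ edgesBetween G e f := by
  rintro y ⟨hy, hye, hyx, hex⟩
  refine ⟨hy, hye, ?_, fun a b w he hf => hex a b w he (hx.2.2.2 a b w he hf)⟩
  rintro rfl
  exact notMem_edgesBetween_of_mem_edgesBetween hw hx ⟨hy, hye, hyx, hex⟩

end Betweenness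

section Spine
variable {G : SimpleGraph V} {r : Sym2 V → ℕ}

lemma exists_isParent_of_adjSup {e f : Sym2 V} (h : AdjSup G r e f) : ∃ p, IsParent G r e p :=
  (exists_min_image_of_wellFoundedLT r ⟨f, h⟩).imp fun _ ⟨hp, hmin⟩ => ⟨hp, hmin⟩

lemma isParent_iff_of_adjSup_iff {G' : SimpleGraph V} {e : Sym2 V}
    (h : ∀ g, AdjSup G r e g ↔ AdjSup G' r e g) (g : Sym2 V) :
    IsParent G r e g ↔ IsParent G' r e g := by
  simp only [IsParent, h]

lemma mem_spine_of_forall_edgesBetween_lt (hinj : Set.InjOn r G.edgeSet)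
    (hlink : ∀ e ∈ G.edgeSet, ∀ f ∈ G.edgeSet,
      ∃ (a b : V) (w : G.Walk a b), e ∈ w.edges ∧ f ∈ w.edges)
    {e f : Sym2 V} (he : e ∈ G.edgeSet) (hf : f ∈ G.edgeSet) (hef : r e < r f)
    (hbtw : ∀ x ∈ edgesBetween G e f, r x < r f) : f ∈ spine G r e := by
  induction hn : r f - r e using Nat.strong_induction_on generalizing e f with
  | _ n ih =>
  have step : ∀ q ∈ G.edgeSet, r e < r q → r q < r f → (∀ y ∈ edgesBetween G e q, r y < r f) →
      q ∈ spine G r e → f ∈ spine G r e := by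
    intro q hq heq hqf hbq hsq
    refine hsq.trans (ih (r f - r q) (by omega) hq hf hqf (fun y hy => ?_) rfl)
    rcases edgesBetween_subset_insert_union e hy with rfl | hy | hy
    exacts [hef, hbq y hy, hbtw y hy]
  by_cases hA : ∃ x ∈ edgesBetween G e f, r e < r x
  · obtain ⟨x, ⟨hx, hex⟩, hxmin⟩ := exists_min_image_of_wellFoundedLT (fun y => r f - r y) hA
    have hxf := hbtw x hx
    have hxmax : ∀ y ∈ edgesBetween G e f, r e < r y → r y ≤ r x := fun y hy hey => by
      have := hxmin y ⟨hy, hey⟩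
      have := hbtw y hy
      omega
    have hxbtw : ∀ y ∈ edgesBetween G e x, r y < r x := by
      intro y hy
      have hy' := edgesBetween_subset_of_mem (hlink e he f hf) hx hy
      by_cases hey : r e < r y
      · exact lt_of_le_of_ne (hxmax y hy' hey) (fun h => hy.2.2.1 (hinj hy.1 hx.1 h))
      · omega
    exact step x hx.1 hex hxf (fun y hy => (hxbtw y hy).trans hxf)
      (ih (r x - r e) (by omega) he hx.1 hex hxbtw rfl)
  · push Not at hA
    have hadj : AdjSup G r e f :=
      ⟨hf, hef, fun x hx => lt_of_le_of_ne (hA x hx) (fun h => hx.2.1 (hinj hx.1 he h))⟩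
    obtain ⟨p, hp, hpmin⟩ := exists_isParent_of_adjSup hadj
    by_cases hpf : p = f
    · exact hpf ▸ .single ⟨hp, hpmin⟩
    have hpf' : r p < r f := lt_of_le_of_ne (hpmin f hadj) (fun h => hpf (hinj hp.1 hf h))
    exact step p hp.1 hp.2.1 hpf' (fun y hy => (hp.2.2 y hy).trans hef) (.single ⟨hp, hpmin⟩)

end Spine

section Merge

variable {G1 G2 : SimpleGraph V} {v : V} {r : Sym2 V → ℕ}

lemma eq_of_mem_support_of_mem_support (hsupp : G1.support ∩ G2.support = {v}) {x : V}
    (h1 : x ∈ G1.support) (h2 : x ∈ G2.support) : v = x :=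
  (hsupp.subset ⟨h1, h2⟩ : x = v).symm

open Classical in
noncomputable def retract (G2 : SimpleGraph V) (v x : V) : V :=
  if x ∈ G2.support then v else x

lemma retract_of_mem_left (hsupp : G1.support ∩ G2.support = {v}) {x : V}
    (hx : x ∈ G1.support) : retract G2 v x = x := by
  unfold retract
  split_ifs with h
  exacts [eq_of_mem_support_of_mem_support hsupp hx h, rfl]

lemma retract_of_mem_right {x : V} (hx : x ∈ G2.support) : retract G2 v x = v := if_pos hx

lemma retract_self : retract G2 v v = v := by
  unfold retract
  split_ifs <;> rfl

lemma exists_walk_left_of_walk_sup (hsupp : G1.support ∩ G2.support = {v}) {a b : V}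
    (W : (G1 ⊔ G2).Walk a b) :
    ∃ (b' : V) (W' : G1.Walk (retract G2 v a) b'), (∀ x ∈ W'.edges, x ∈ W.edges) ∧
      (∀ x ∈ W.edges, x ∈ G1.edgeSet → x ∈ W'.edges) ∧ (v ∈ W.support → v ∈ W'.support) := by
  induction W with
  | nil =>
    refine ⟨_, .nil, by simp, by simp, ?_⟩
    simp only [Walk.support_nil, List.mem_singleton]
    rintro rfl
    exact retract_self.symm
  | @cons a c b h w ih =>
    obtain ⟨b', W', hsub, hsup, hv⟩ := ih
    by_cases h1 : G1.Adj a c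
    · have ha := retract_of_mem_left hsupp h1.mem_support_left
      have hc := retract_of_mem_left hsupp h1.mem_support_right
      refine ⟨b', (Walk.cons h1 (W'.copy hc rfl)).copy ha.symm rfl, ?_, ?_, ?_⟩
      · simp only [Walk.edges_copy, Walk.edges_cons, List.mem_cons]
        rintro x (rfl | hx)
        exacts [.inl rfl, .inr (hsub x hx)]
      · simp only [Walk.edges_copy, Walk.edges_cons, List.mem_cons]
        rintro x (rfl | hx) hx1
        exacts [.inl rfl, .inr (hsup x hx hx1)]
      · simp only [Walk.support_copy, Walk.support_cons, List.mem_cons]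
        exact Or.imp id hv
    · have h2 : G2.Adj a c := ((sup_adj ..).mp h).resolve_left h1
      have hac : retract G2 v c = retract G2 v a := by
        rw [retract_of_mem_right h2.mem_support_left, retract_of_mem_right h2.mem_support_right]
      refine ⟨b', W'.copy hac rfl, ?_, ?_, ?_⟩
      · simp only [Walk.edges_copy, Walk.edges_cons]
        exact fun x hx => List.mem_cons_of_mem _ (hsub x hx)
      · simp only [Walk.edges_copy, Walk.edges_cons, List.mem_cons]
        rintro x (rfl | hx) hx1
        · exact absurd hx1 h1
        · exact hsup x hx hx1
      · simp only [Walk.support_copy, Walk.support_cons, List.mem_cons]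
        rintro (rfl | hx)
        · simpa [hac, retract_self] using W'.start_mem_support
        · exact hv hx

lemma mem_support_of_walk_sup (hsupp : G1.support ∩ G2.support = {v}) {a b : V}
    (W : (G1 ⊔ G2).Walk a b) (ha : a ∈ G1.support) (hb : b ∈ G2.support) : v ∈ W.support := by
  induction W with
  | nil => exact List.mem_singleton.mpr (eq_of_mem_support_of_mem_support hsupp ha hb)
  | @cons a c b h w ih =>
    rcases (sup_adj ..).mp h with h1 | h2
    · exact List.mem_cons_of_mem _ (ih h1.mem_support_right hb)
    · exact List.mem_cons.mpr (.inl (eq_of_mem_support_of_mem_support hsupp ha h2.mem_support_left))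

lemma mem_support_of_mem_edges_sup (hsupp : G1.support ∩ G2.support = {v}) {a b : V}
    {W : (G1 ⊔ G2).Walk a b} {f g : Sym2 V} (hf : f ∈ W.edges) (hf1 : f ∈ G1.edgeSet)
    (hg : g ∈ W.edges) (hg2 : g ∈ G2.edgeSet) : v ∈ W.support := by
  classical
  obtain ⟨S, -, hS⟩ := W.exists_walk_of_mem_support (Walk.mem_support_of_mem_edges hf f.out_fst_mem)
    (Walk.mem_support_of_mem_edges hg g.out_fst_mem)
  exact hS v (mem_support_of_walk_sup hsupp S (mem_support_of_mem_edgeSet hf1 f.out_fst_mem)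
    (mem_support_of_mem_edgeSet hg2 g.out_fst_mem))

lemma edgesBetween_sup_eq (hsupp : G1.support ∩ G2.support = {v}) {e f : Sym2 V}
    (hw : ∃ (a b : V) (w : G1.Walk a b), e ∈ w.edges ∧ f ∈ w.edges) :
    edgesBetween (G1 ⊔ G2) e f = edgesBetween G1 e f := by
  obtain ⟨_, _, w, hew, hfw⟩ := hw
  ext x
  constructor
  · rintro ⟨-, hxe, hxf, hx⟩
    have hx' : ∀ a b (w : G1.Walk a b), e ∈ w.edges → f ∈ w.edges → x ∈ w.edges :=
      fun a b w he hf => by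
        simpa using hx a b (w.mapLe le_sup_left) (by simpa using he) (by simpa using hf)
    exact ⟨w.edges_subset_edgeSet (hx' _ _ w hew hfw), hxe, hxf, hx'⟩
  · rintro ⟨hx, hxe, hxf, hx'⟩
    refine ⟨edgeSet_mono le_sup_left hx, hxe, hxf, fun a b W he hf => ?_⟩
    obtain ⟨_, W', hsub, hsup, -⟩ := exists_walk_left_of_walk_sup hsupp W
    exact hsub x (hx' _ _ W' (hsup e he (w.edges_subset_edgeSet hew))
      (hsup f hf (w.edges_subset_edgeSet hfw)))

lemma adjSup_sup_iff (hsupp : G1.support ∩ G2.support = {v}) {e f : Sym2 V}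
    (hw : ∃ (a b : V) (w : G1.Walk a b), e ∈ w.edges ∧ f ∈ w.edges) :
    AdjSup (G1 ⊔ G2) r e f ↔ AdjSup G1 r e f := by
  have hf : f ∈ G1.edgeSet := by
    obtain ⟨_, _, w, -, hfw⟩ := hw
    exact w.edges_subset_edgeSet hfw
  simp only [AdjSup, edgesBetween_sup_eq hsupp hw, hf, edgeSet_mono le_sup_left hf, true_and]

lemma mem_edgesBetween_sup_of_forall_walk (hsupp : G1.support ∩ G2.support = {v})
    (hdisj : Disjoint G1.edgeSet G2.edgeSet) {f g x : Sym2 V} (hf : f ∈ G1.edgeSet)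
    (hg : g ∈ G2.edgeSet) (hx : x ∈ G1.edgeSet) (hxf : x ≠ f)
    (hwalk : ∀ a b (W : G1.Walk a b), f ∈ W.edges → v ∈ W.support → x ∈ W.edges) :
    x ∈ edgesBetween (G1 ⊔ G2) f g := by
  refine ⟨edgeSet_mono le_sup_left hx, hxf, fun h => hdisj.ne_of_mem hx hg h,
    fun a b W hfW hgW => ?_⟩
  obtain ⟨_, W', hsub, hsup, hv⟩ := exists_walk_left_of_walk_sup hsupp W
  exact hsub x (hwalk _ _ W' (hsup f hfW hf)
    (hv (mem_support_of_mem_edges_sup hsupp hfW hf hgW hg)))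

lemma edgesBetween_subset_edgesBetween_sup (hsupp : G1.support ∩ G2.support = {v})
    (hdisj : Disjoint G1.edgeSet G2.edgeSet) {e f g : Sym2 V} (he : e ∈ G1.edgeSet)
    (hve : v ∈ e) (hf : f ∈ G1.edgeSet) (hg : g ∈ G2.edgeSet) :
    edgesBetween G1 e f ⊆ edgesBetween (G1 ⊔ G2) f g := by
  classical
  rintro x ⟨hx, hxe, hxf, hbtw⟩
  refine mem_edgesBetween_sup_of_forall_walk hsupp hdisj hf hg hx hxf fun a b W hfW hvW => ?_
  obtain ⟨z, rfl⟩ := Sym2.mem_iff_exists.mp hve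
  obtain ⟨_, _, W', hW'⟩ := W.exists_walk_edges_iff_of_mem_support (Adj.toWalk he) hvW
    (Walk.start_mem_support _)
  have hedge : (Adj.toWalk he).edges = [s(v, z)] := rfl
  simp only [hedge, List.mem_singleton] at hW'
  exact ((hW' x).1 (hbtw _ _ W' ((hW' _).2 (.inr rfl)) ((hW' f).2 (.inl hfW)))).resolve_right hxe

lemma exists_incident_mem_edgesBetween_sup (h1 : (G1.induce G1.support).IsTree)
    (hsupp : G1.support ∩ G2.support = {v}) (hdisj : Disjoint G1.edgeSet G2.edgeSet)
    (hv : v ∈ G1.support) {f g : Sym2 V} (hf : f ∈ G1.edgeSet) (hvf : v ∉ f)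
    (hg : g ∈ G2.edgeSet) : ∃ h ∈ G1.edgeSet, v ∈ h ∧ h ∈ edgesBetween (G1 ⊔ G2) f g := by
  classical
  obtain ⟨u, hu⟩ : ∃ u, u ∈ f := ⟨_, f.out_fst_mem⟩
  obtain ⟨P, hP⟩ := (reachable_of_connected_induce_support h1.connected hv
    (mem_support_of_mem_edgeSet hf hu)).exists_isPath
  cases P with
  | nil => exact absurd hu hvf
  | @cons _ z _ hvz Q =>
  have hQ : s(v, z) ∉ Q.edges := ((Walk.isTrail_cons ..).mp hP.isTrail).2
  refine ⟨s(v, z), hvz, Sym2.mem_mk_left .., mem_edgesBetween_sup_of_forall_walk hsupp hdisj hf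
    hg hvz (fun h => hvf (h ▸ Sym2.mem_mk_left ..)) fun a b W hfW hvW => ?_⟩
  -- `s(v, z)` is a bridge, and `Q` followed by a piece of `W` joins its endpoints
  obtain ⟨S, hS, -⟩ := W.exists_walk_of_mem_support (Walk.mem_support_of_mem_edges hfW hu) hvW
  have hbridge := isBridge_iff_forall_walk_mem_edges.mp
    (isAcyclic_iff_forall_isBridge.mp (isAcyclic_of_isAcyclic_induce_support h1.isAcyclic) hvz)
    (Q.append S).reverse
  simp only [Walk.edges_reverse, List.mem_reverse, Walk.edges_append, List.mem_append] at hbridge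
  exact hS _ (hbridge.resolve_left hQ)

lemma not_adjSup_sup_of_notMem_spine (h1 : (G1.induce G1.support).IsTree)
    (hsupp : G1.support ∩ G2.support = {v}) (hdisj : Disjoint G1.edgeSet G2.edgeSet)
    (hr : Set.InjOn r G1.edgeSet) {e f g : Sym2 V}
    (he : e ∈ G1.edgeSet ∧ v ∈ e ∧ ∀ f ∈ G1.edgeSet, v ∈ f → r e ≤ r f)
    (hf : f ∈ G1.edgeSet) (hfs : f ∉ spine G1 r e) (hg : g ∈ G2.edgeSet) :
    ¬ AdjSup (G1 ⊔ G2) r f g := by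
  obtain ⟨he, hve, hmin⟩ := he
  rintro ⟨-, -, hbound⟩
  have hef : r e < r f := by
    refine lt_of_le_of_ne ?_ fun h => hfs (hr he hf h ▸ .refl)
    by_cases hvf : v ∈ f
    · exact hmin f hf hvf
    · obtain ⟨h, hh, hvh, hbtw⟩ := exists_incident_mem_edgesBetween_sup h1 hsupp hdisj
        (mem_support_of_mem_edgeSet he hve) hf hvf hg
      exact (hmin h hh hvh).trans (hbound h hbtw).le
  exact hfs <| mem_spine_of_forall_edgesBetween_lt hr
    (fun _ he _ hf => exists_walk_mem_edges_of_connected_induce_support h1.connected he hf) he hf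
    hef fun x hx => hbound x (edgesBetween_subset_edgesBetween_sup hsupp hdisj he hve hf hg hx)

theorem isParent_sup_iff_of_notMem_spine (h1 : (G1.induce G1.support).IsTree)
    (hsupp : G1.support ∩ G2.support = {v}) (hdisj : Disjoint G1.edgeSet G2.edgeSet)
    (hr : Set.InjOn r (G1 ⊔ G2).edgeSet) {e f : Sym2 V}
    (he : e ∈ G1.edgeSet ∧ v ∈ e ∧ ∀ f ∈ G1.edgeSet, v ∈ f → r e ≤ r f)
    (hf : f ∈ G1.edgeSet) (hfs : f ∉ spine G1 r e) (g : Sym2 V) :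
    IsParent (G1 ⊔ G2) r f g ↔ IsParent G1 r f g := by
  refine isParent_iff_of_adjSup_iff (fun g => ?_) g
  by_cases hg : g ∈ G1.edgeSet
  · exact adjSup_sup_iff hsupp
      (exists_walk_mem_edges_of_connected_induce_support h1.connected hf hg)
  · refine ⟨fun hsup => ?_, fun h => absurd h.1 hg⟩
    have hg2 : g ∈ G2.edgeSet :=
      (edgeSet_sup G1 G2 ▸ hsup.1 : g ∈ G1.edgeSet ∪ _).resolve_left hg
    exact absurd hsup (not_adjSup_sup_of_notMem_spine h1 hsupp hdisj
      (hr.mono (edgeSet_mono le_sup_left)) he hf hfs hg2)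

end Merge

/- `e1s` and `e2s` stand for `e1*` and `e2*`. -/

variable [Fintype V] (G1 G2 : SimpleGraph V) (v : V) (r : Sym2 V → ℕ)
  (e1s e2s : Sym2 V)

theorem stmt6
    (h1 : (G1.induce G1.support).IsTree) (h2 : (G2.induce G2.support).IsTree)
    (hsupp : G1.support ∩ G2.support = {v})
    (hdisj : Disjoint G1.edgeSet G2.edgeSet)
    (hr : Set.InjOn r (G1 ⊔ G2).edgeSet)
    (he1 : e1s ∈ G1.edgeSet ∧ v ∈ e1s ∧ ∀ f ∈ G1.edgeSet, v ∈ f → r e1s ≤ r f)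
    (he2 : e2s ∈ G2.edgeSet ∧ v ∈ e2s ∧ ∀ f ∈ G2.edgeSet, v ∈ f → r e2s ≤ r f) :
    (∀ f ∈ G1.edgeSet, f ∉ spine G1 r e1s →
      ∀ g, IsParent (G1 ⊔ G2) r f g ↔ IsParent G1 r f g) ∧
    (∀ f ∈ G2.edgeSet, f ∉ spine G2 r e2s →
      ∀ g, IsParent (G1 ⊔ G2) r f g ↔ IsParent G2 r f g) := by
  refine ⟨fun f hf hfs => isParent_sup_iff_of_notMem_spine h1 hsupp hdisj hr he1 hf hfs,
    fun f hf hfs => ?_⟩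
  rw [sup_comm] at hr ⊢
  exact isParent_sup_iff_of_notMem_spine h2 (by rwa [Set.inter_comm]) hdisj.symm hr he2 hf hfs
end

section
/- (Claim in the proof of Theorem 3.5.) For every edge e ∈ spine1(e1*), every adjacent superior of e in G that is not an adjacent superior of e in G1 belongs to spine2(e2*). Symmetrically, for e ∈ spine2(e2*), every adjacent superior of e in G that is not an adjacent superior of e in G2 belongs to spine1(e1*). -/
/- Single tree setting: `G` is a finite tree with injective edge ranks `r`.
`edgesBetween G e f` is the set of edges strictly between edges `e` and `f`
on the unique tree path connecting them (an edge `g ∉ {e,f}` lies on this path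
iff it belongs to every walk containing both `e` and `f`). -/

open SimpleGraph

variable {V : Type*}

/-!
Write `G = G₁ ⊔ G₂` and work with separation: `g` lies between `e` and `f` iff deleting `g`
disconnects them. As the two trees share only `v`, a walk in `G` between vertices of `G₁`
can be replaced by one in `G₁` (its excursions into `G₂` return through `v`), so for
`e ∈ G₁` an adjacent superior in `G` that is not one in `G₁` lies in `G₂`. For such `f`,
every edge of `G₂` cutting `v` off from `f` lies between `e` and `f` in `G`, hence has rank
below `r e < r f`. This bounds the edges between `e₂*` and `f` in `G₂`, and, applied to the
first edge of the path from `v` to `f`, gives `r e₂* ≤ r f`.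

It remains to see that in a connected graph `f` is on the spine of `e` as soon as
`r e ≤ r f` and every edge between `e` and `f` has rank below `r f`: then `e` has an adjacent
superior of rank at most `r f`, so its parent `p` satisfies `r p ≤ r f`, and the pair `p, f`
again has the property, so induction on `r f - r e` applies.
-/

namespace SimpleGraph

variable {H K₁ K₂ : SimpleGraph V} {a b t u w v : V} {x : Sym2 V} {S T : Set V}

lemma mem_support_of_mem_edgeSet_s7 (hx : x ∈ H.edgeSet) (ha : a ∈ x) : a ∈ H.support := by
  induction x using Sym2.ind with
  | _ p q =>
    rcases Sym2.mem_iff.mp ha with rfl | rfl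
    exacts [(H.mem_edgeSet.mp hx).mem_support_left, (H.mem_edgeSet.mp hx).mem_support_right]

lemma reachable_of_mem_edgeSet (hx : x ∈ H.edgeSet) (ha : a ∈ x) (hb : b ∈ x) :
    H.Reachable a b := by
  rcases eq_or_ne a b with rfl | hab
  · rfl
  · exact Adj.reachable (by rwa [← mem_edgeSet, ← (Sym2.mem_and_mem_iff hab).mp ⟨ha, hb⟩])

lemma reachable_of_preconnected_induce_support (hconn : (H.induce H.support).Preconnected)
    (ha : a ∈ H.support) (hb : b ∈ H.support) : H.Reachable a b :=
  (hconn ⟨a, ha⟩ ⟨b, hb⟩).map (Embedding.induce _).toHom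

lemma isAcyclic_of_isAcyclic_induce_support_s7 (h : (H.induce H.support).IsAcyclic) :
    H.IsAcyclic := by
  intro u c hc
  have hsupp : ∀ t ∈ c.support, t ∈ H.support :=
    fun t ht => mem_support_of_mem_walk_support c hc.not_nil ht
  exact h (c.induce _ hsupp)
    (Walk.IsCycle.of_map (f := (Embedding.induce _).toHom) (by rwa [Walk.map_induce]))

lemma IsAcyclic.exists_adj_not_reachable_deleteEdges (hH : H.IsAcyclic) (h : H.Reachable u w)
    (huw : u ≠ w) : ∃ c, H.Adj u c ∧ ¬ (H.deleteEdges {s(u, c)}).Reachable u w := by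
  classical
  obtain ⟨p⟩ := h
  obtain ⟨c, hadj, q, hq⟩ := Walk.exists_eq_cons_of_ne huw p.bypass
  have hu : u ∉ q.support := ((Walk.cons_isPath_iff hadj q).mp (hq ▸ p.bypass_isPath)).2
  have hcw : (H.deleteEdges {s(u, c)}).Reachable c w :=
    ⟨q.toDeleteEdges _ fun e he hmem => hu (q.fst_mem_support_of_mem_edges (hmem ▸ he))⟩
  exact ⟨c, hadj, fun huw' =>
    isAcyclic_iff_forall_adj_isBridge.mp hH hadj (huw'.trans hcw.symm)⟩

/-- Stop at the first vertex of `S`: the edges of `D` have both endpoints in `S`, so none of them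
is used before. -/
lemma Reachable.exists_mem_reachable_deleteEdges {D : Set (Sym2 V)}
    (hD : ∀ d ∈ D, ∀ t ∈ d, t ∈ S) (h : H.Reachable a b) (hb : b ∈ S) :
    ∃ u ∈ S, (H.deleteEdges D).Reachable a u := by
  obtain ⟨p⟩ := h
  induction p with
  | nil => exact ⟨_, hb, .refl _⟩
  | @cons a c b hadj p ih =>
    by_cases ha : a ∈ S
    · exact ⟨a, ha, .refl _⟩
    obtain ⟨u, hu, hcu⟩ := ih hb
    have hac : (H.deleteEdges D).Adj a c :=
      deleteEdges_adj.mpr ⟨hadj, fun hd => ha (hD _ hd _ (Sym2.mem_mk_left a c))⟩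
    exact ⟨u, hu, hac.reachable.trans hcu⟩

open Classical in
noncomputable def collapse (S : Set V) (v t : V) : V := if t ∈ S then v else t

lemma collapse_of_mem (ht : t ∈ S) : collapse S v t = v := if_pos ht

lemma collapse_eq_self (ht : t ∈ T) (hST : S ∩ T ⊆ {v}) : collapse S v t = t := by
  unfold collapse
  split_ifs with hS
  exacts [(hST ⟨hS, ht⟩).symm, rfl]

lemma Reachable.collapse (h₁ : K₁.support ⊆ S) (h₂ : S ∩ K₂.support ⊆ {v})
    (h : (K₁ ⊔ K₂).Reachable a b) : K₂.Reachable (collapse S v a) (collapse S v b) := by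
  obtain ⟨p⟩ := h
  induction p with
  | nil => rfl
  | @cons a c b hadj p ih =>
    refine Reachable.trans ?_ ih
    rcases hadj with hadj | hadj
    · rw [collapse_of_mem (h₁ hadj.mem_support_left),
        collapse_of_mem (h₁ hadj.mem_support_right)]
    · rw [collapse_eq_self hadj.mem_support_left h₂,
        collapse_eq_self hadj.mem_support_right h₂]
      exact hadj.reachable

end SimpleGraph

section Separation

variable {H : SimpleGraph V} {a c : V} {e f g x y : Sym2 V}

def Separates (H : SimpleGraph V) (g e f : Sym2 V) : Prop :=
  ∀ a ∈ e, ∀ b ∈ f, ¬ (H.deleteEdges {g}).Reachable a b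

lemma Separates.symm (h : Separates H g e f) : Separates H g f e :=
  fun a ha b hb hab => h b hb a ha hab.symm

lemma mem_edgesBetween_iff (he : e ∈ H.edgeSet) (hf : f ∈ H.edgeSet) :
    g ∈ edgesBetween H e f ↔ g ∈ H.edgeSet ∧ g ≠ e ∧ g ≠ f ∧ Separates H g e f := by
  refine and_congr_right fun _ => and_congr_right fun hge => and_congr_right fun hgf => ⟨?_, ?_⟩
  · rintro hwalk a ha b hb ⟨p⟩
    have hea : H.Adj (Sym2.Mem.other ha) a := by
      rw [← mem_edgeSet, Sym2.eq_swap, Sym2.other_spec]; exact he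
    have hfb : H.Adj b (Sym2.Mem.other hb) := by
      rw [← mem_edgeSet, Sym2.other_spec]; exact hf
    have hg := hwalk _ _ (.cons hea ((p.mapLe (deleteEdges_le _)).concat hfb))
      (by simp [Sym2.eq_swap, Sym2.other_spec]) (by simp [Sym2.other_spec])
    simp only [Walk.edges_cons, Walk.edges_concat, Walk.edges_mapLe_eq_edges, Sym2.eq_swap,
      Sym2.other_spec, List.mem_cons, List.concat_eq_append, List.mem_append, List.not_mem_nil,
      or_false] at hg
    rcases hg with rfl | hg | rfl
    exacts [hge rfl, by simpa using p.edges_subset_edgeSet hg, hgf rfl]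
  · intro hsep a b w hew hfw
    by_contra hgw
    let w' := w.toDeleteEdges {g} fun _ hd hdg => hgw (Set.mem_singleton_iff.mp hdg ▸ hd)
    have hreach : ∀ t ∈ w.support, (H.deleteEdges {g}).Reachable a t := by
      classical
      exact fun t ht => ⟨w'.takeUntil t (by simpa [w'] using ht)⟩
    exact hsep _ e.out_fst_mem _ f.out_fst_mem <|
      (hreach _ (w.mem_support_of_mem_edges hew e.out_fst_mem)).symm.trans
        (hreach _ (w.mem_support_of_mem_edges hfw f.out_fst_mem))

lemma Separates.left_or_right (h : Separates H g e f) (hy : y ∈ H.edgeSet) (hyg : y ≠ g) :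
    Separates H g e y ∨ Separates H g y f := by
  by_contra! hcon
  simp only [Separates, not_forall, not_not] at hcon
  obtain ⟨⟨a, ha, b, hb, hab⟩, ⟨c, hc, d, hd, hcd⟩⟩ := hcon
  have hy' : y ∈ (H.deleteEdges {g}).edgeSet := by simpa [edgeSet_deleteEdges] using ⟨hy, hyg⟩
  exact h a ha d hd (hab.trans ((reachable_of_mem_edgeSet hy' hb hc).trans hcd))

/-- A walk from `e` stopped at its first endpoint of `x` or `y` uses neither `x` nor `y`. -/
lemma Separates.not_separates_swap (hyx : Separates H y e x) (ha : a ∈ e) (hc : c ∈ x)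
    (hac : H.Reachable a c) : ¬ Separates H x e y := by
  obtain ⟨u, hu, hau⟩ := hac.exists_mem_reachable_deleteEdges (S := {t | t ∈ x ∨ t ∈ y})
    (D := {x, y}) (by rintro d (rfl | rfl) t ht; exacts [Or.inl ht, Or.inr ht]) (Or.inl hc)
  rcases hu with hu | hu
  · exact absurd (hau.mono (deleteEdges_anti (by simp))) (hyx a ha u hu)
  · exact fun hxy => hxy a ha u hu (hau.mono (deleteEdges_anti (by simp)))

end Separation

section SpineCriterion

variable {H : SimpleGraph V} {r : Sym2 V → ℕ} {e f g h k p : Sym2 V}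

lemma notMem_edgesBetween_of_mem (hconn : (H.induce H.support).Preconnected)
    (he : e ∈ H.edgeSet) (hh : h ∈ edgesBetween H e k) : k ∉ edgesBetween H e h := by
  intro hk
  have hsep := ((mem_edgesBetween_iff he hh.1).mp hk).2.2.2
  refine Separates.not_separates_swap hsep e.out_fst_mem h.out_fst_mem ?_
    ((mem_edgesBetween_iff he hk.1).mp hh).2.2.2
  exact reachable_of_preconnected_induce_support hconn
    (mem_support_of_mem_edgeSet_s7 he e.out_fst_mem) (mem_support_of_mem_edgeSet_s7 hh.1 h.out_fst_mem)

lemma edgesBetween_trans (hconn : (H.induce H.support).Preconnected) (he : e ∈ H.edgeSet)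
    (hg : g ∈ edgesBetween H e h) (hh : h ∈ edgesBetween H e k) : g ∈ edgesBetween H e k :=
  ⟨hg.1, hg.2.1, by rintro rfl; exact notMem_edgesBetween_of_mem hconn he hh hg,
    fun a b w hew hkw => hg.2.2.2 a b w hew (hh.2.2.2 a b w hew hkw)⟩

/-- Among `f` and the edges between `e` and `f` of rank above `r e`, one closest to `e` is an
adjacent superior of `e`. -/
lemma exists_adjSup_le [Finite V] (hconn : (H.induce H.support).Preconnected)
    (hinj : Set.InjOn r H.edgeSet) (he : e ∈ H.edgeSet) (hf : f ∈ H.edgeSet) (hef : r e < r f)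
    (hB : ∀ g ∈ edgesBetween H e f, r g < r f) : ∃ h, AdjSup H r e h ∧ r h ≤ r f := by
  let R : Sym2 V → Sym2 V → Prop := fun g h => g ∈ edgesBetween H e h
  have : IsTrans _ R := ⟨fun _ _ _ => edgesBetween_trans hconn he⟩
  have : Std.Irrefl R := ⟨fun g hg => hg.2.2.1 rfl⟩
  obtain ⟨h, ⟨hrh, hT⟩, hmin⟩ := (Finite.wellFounded_of_trans_of_irrefl R).has_min
    {h | r e < r h ∧ (h = f ∨ h ∈ edgesBetween H e f)} ⟨f, hef, Or.inl rfl⟩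
  refine ⟨h, ⟨hT.elim (· ▸ hf) (·.1), hrh, fun g hg => ?_⟩,
    hT.elim (fun hhf => (congrArg r hhf).le) (hB h · |>.le)⟩
  by_contra! hge
  have hrg : r e < r g := hge.lt_of_ne fun hr => hg.2.1 (hinj hg.1 he hr.symm)
  refine hmin g ⟨hrg, Or.inr ?_⟩ hg
  rcases hT with rfl | hh
  exacts [hg, edgesBetween_trans hconn he hg hh]

lemma exists_isParent_le_s7 [Finite V] (hconn : (H.induce H.support).Preconnected)
    (hinj : Set.InjOn r H.edgeSet) (he : e ∈ H.edgeSet) (hf : f ∈ H.edgeSet) (hef : r e < r f)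
    (hB : ∀ g ∈ edgesBetween H e f, r g < r f) : ∃ p, IsParent H r e p ∧ r p ≤ r f := by
  obtain ⟨h, hh, hhf⟩ := exists_adjSup_le hconn hinj he hf hef hB
  obtain ⟨p, hp, hmin⟩ :=
    Set.exists_min_image {h | AdjSup H r e h} r (Set.toFinite _) ⟨h, hh⟩
  exact ⟨p, ⟨hp, hmin⟩, (hmin h hh).trans hhf⟩

lemma AdjSup.forall_edgesBetween_lt (hp : AdjSup H r e p) (he : e ∈ H.edgeSet)
    (hf : f ∈ H.edgeSet) (hpf : r p ≤ r f) (hB : ∀ g ∈ edgesBetween H e f, r g < r f) :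
    ∀ g ∈ edgesBetween H p f, r g < r f := by
  intro g hg
  rcases eq_or_ne g e with rfl | hge
  · exact hp.2.1.trans_le hpf
  obtain ⟨hgE, hgp, hgf, hsep⟩ := (mem_edgesBetween_iff hp.1 hf).mp hg
  rcases hsep.left_or_right he hge.symm with hpe | hef
  · exact (hp.2.2 g ((mem_edgesBetween_iff he hp.1).mpr ⟨hgE, hge, hgp, hpe.symm⟩)).trans
      (hp.2.1.trans_le hpf)
  · exact hB g ((mem_edgesBetween_iff he hf).mpr ⟨hgE, hge, hgf, hef⟩)

theorem mem_spine_of_forall_edgesBetween_lt_s7 [Finite V]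
    (hconn : (H.induce H.support).Preconnected) (hinj : Set.InjOn r H.edgeSet)
    (he : e ∈ H.edgeSet) (hf : f ∈ H.edgeSet) (hef : r e ≤ r f)
    (hB : ∀ g ∈ edgesBetween H e f, r g < r f) : f ∈ spine H r e := by
  induction hn : r f - r e using Nat.strong_induction_on generalizing e with
  | _ n ih =>
    rcases hef.eq_or_lt with heq | hlt
    · rw [hinj he hf heq]
      exact .refl
    obtain ⟨p, hp, hpf⟩ := exists_isParent_le_s7 hconn hinj he hf hlt hB
    have hep : r e < r p := hp.1.2.1
    exact .head hp (ih _ (by omega) hp.1.1 hpf (hp.1.forall_edgesBetween_lt he hf hpf hB) rfl)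

lemma spine_subset_edgeSet (he : e ∈ H.edgeSet) : spine H r e ⊆ H.edgeSet := by
  intro f hf
  induction hf with
  | refl => exact he
  | tail _ hp _ => exact hp.1.1

end SpineCriterion

section Merge

variable {G1 G2 : SimpleGraph V} {v : V} {r : Sym2 V → ℕ} {e f g : Sym2 V}

lemma Separates.sup_left (hsupp : G1.support ∩ G2.support ⊆ {v}) (he : e ∈ G1.edgeSet)
    (hf : f ∈ G1.edgeSet) (h : Separates G1 g e f) : Separates (G1 ⊔ G2) g e f := by
  intro a ha b hb hab
  rw [deleteEdges_sup, sup_comm] at hab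
  have := hab.collapse (S := G2.support) (v := v) (support_mono (deleteEdges_le _))
    fun t ht => hsupp ⟨support_mono (deleteEdges_le _) ht.2, ht.1⟩
  rw [Set.inter_comm] at hsupp
  rw [collapse_eq_self (mem_support_of_mem_edgeSet_s7 he ha) hsupp,
    collapse_eq_self (mem_support_of_mem_edgeSet_s7 hf hb) hsupp] at this
  exact h a ha b hb this

lemma separates_sup_of_not_reachable (hsupp : G1.support ∩ G2.support ⊆ {v})
    (he : e ∈ G1.edgeSet) (hf : f ∈ G2.edgeSet)
    (h : ∀ b ∈ f, ¬ (G2.deleteEdges {g}).Reachable v b) : Separates (G1 ⊔ G2) g e f := by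
  intro a ha b hb hab
  rw [deleteEdges_sup] at hab
  have := hab.collapse (S := G1.support) (v := v) (support_mono (deleteEdges_le _))
    fun t ht => hsupp ⟨ht.1, support_mono (deleteEdges_le _) ht.2⟩
  rw [collapse_of_mem (mem_support_of_mem_edgeSet_s7 he ha),
    collapse_eq_self (mem_support_of_mem_edgeSet_s7 hf hb) hsupp] at this
  exact h b hb this

lemma AdjSup.of_sup_left (hsupp : G1.support ∩ G2.support ⊆ {v}) (he : e ∈ G1.edgeSet)
    (hf : f ∈ G1.edgeSet) (h : AdjSup (G1 ⊔ G2) r e f) : AdjSup G1 r e f := by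
  refine ⟨hf, h.2.1, fun g hg => h.2.2 g ?_⟩
  obtain ⟨hgE, hge, hgf, hsep⟩ := (mem_edgesBetween_iff he hf).mp hg
  exact (mem_edgesBetween_iff (edgeSet_mono le_sup_left he) (edgeSet_mono le_sup_left hf)).mpr
    ⟨edgeSet_mono le_sup_left hgE, hge, hgf, hsep.sup_left hsupp he hf⟩

lemma mem_edgesBetween_sup_of_not_reachable (hsupp : G1.support ∩ G2.support ⊆ {v})
    (hdisj : Disjoint G1.edgeSet G2.edgeSet) (he : e ∈ G1.edgeSet) (hf : f ∈ G2.edgeSet)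
    (hg : g ∈ G2.edgeSet) (hgf : g ≠ f)
    (h : ∀ b ∈ f, ¬ (G2.deleteEdges {g}).Reachable v b) : g ∈ edgesBetween (G1 ⊔ G2) e f :=
  (mem_edgesBetween_iff (edgeSet_mono le_sup_left he) (edgeSet_mono le_sup_right hf)).mpr
    ⟨edgeSet_mono le_sup_right hg, fun hge => Set.disjoint_left.mp hdisj (hge ▸ he) hg, hgf,
      separates_sup_of_not_reachable hsupp he hf h⟩

theorem mem_spine_of_adjSup_sup_of_not_adjSup [Finite V] {e2 : Sym2 V}
    (h2 : (G2.induce G2.support).IsTree) (hsupp : G1.support ∩ G2.support ⊆ {v})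
    (hdisj : Disjoint G1.edgeSet G2.edgeSet) (hr : Set.InjOn r G2.edgeSet)
    (he2 : e2 ∈ G2.edgeSet) (hve2 : v ∈ e2)
    (hmin : ∀ f ∈ G2.edgeSet, v ∈ f → r e2 ≤ r f)
    (he : e ∈ G1.edgeSet) (hsup : AdjSup (G1 ⊔ G2) r e f) (hnot : ¬ AdjSup G1 r e f) :
    f ∈ spine G2 r e2 := by
  have hf : f ∈ G2.edgeSet := by
    rcases (edgeSet_sup G1 G2 ▸ hsup.1 : f ∈ G1.edgeSet ∪ G2.edgeSet) with hf | hf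
    exacts [absurd (hsup.of_sup_left hsupp he hf) hnot, hf]
  have hcut : ∀ g ∈ G2.edgeSet, g ≠ f →
      (∀ b ∈ f, ¬ (G2.deleteEdges {g}).Reachable v b) → r g < r e := fun g hg hgf h =>
    hsup.2.2 g (mem_edgesBetween_sup_of_not_reachable hsupp hdisj he hf hg hgf h)
  have hB : ∀ g ∈ edgesBetween G2 e2 f, r g < r f := fun g hg => by
    obtain ⟨hgE, -, hgf, hsep⟩ := (mem_edgesBetween_iff he2 hf).mp hg
    exact (hcut g hgE hgf (hsep v hve2)).trans hsup.2.1
  have hle : r e2 ≤ r f := by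
    by_cases hvf : v ∈ f
    · exact hmin f hf hvf
    have hreach := reachable_of_preconnected_induce_support h2.connected.preconnected
      (mem_support_of_mem_edgeSet_s7 he2 hve2) (mem_support_of_mem_edgeSet_s7 hf f.out_fst_mem)
    obtain ⟨c, hvc, hvf'⟩ := (isAcyclic_of_isAcyclic_induce_support_s7 h2.isAcyclic
      ).exists_adj_not_reachable_deleteEdges hreach fun h => hvf (h ▸ f.out_fst_mem)
    have hne : s(v, c) ≠ f := fun h => hvf (h ▸ Sym2.mem_mk_left v c)
    have hf' : f ∈ (G2.deleteEdges {s(v, c)}).edgeSet := by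
      simpa [edgeSet_deleteEdges] using ⟨hf, hne.symm⟩
    refine le_of_lt ?_
    calc r e2 ≤ r s(v, c) := hmin _ hvc (Sym2.mem_mk_left v c)
      _ < r e := hcut _ hvc hne fun b hb hvb =>
          hvf' (hvb.trans (reachable_of_mem_edgeSet hf' hb f.out_fst_mem))
      _ < r f := hsup.2.1
  exact mem_spine_of_forall_edgesBetween_lt_s7 h2.connected.preconnected hr he2 hf hle hB

end Merge

variable [Fintype V] (G1 G2 : SimpleGraph V) (v : V) (r : Sym2 V → ℕ)
  (e1s e2s : Sym2 V)

theorem stmt7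
    (h1 : (G1.induce G1.support).IsTree) (h2 : (G2.induce G2.support).IsTree)
    (hsupp : G1.support ∩ G2.support = {v})
    (hdisj : Disjoint G1.edgeSet G2.edgeSet)
    (hr : Set.InjOn r (G1 ⊔ G2).edgeSet)
    (he1 : e1s ∈ G1.edgeSet ∧ v ∈ e1s ∧ ∀ f ∈ G1.edgeSet, v ∈ f → r e1s ≤ r f)
    (he2 : e2s ∈ G2.edgeSet ∧ v ∈ e2s ∧ ∀ f ∈ G2.edgeSet, v ∈ f → r e2s ≤ r f) :
    (∀ e ∈ spine G1 r e1s, ∀ f, AdjSup (G1 ⊔ G2) r e f → ¬ AdjSup G1 r e f →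
      f ∈ spine G2 r e2s) ∧
    (∀ e ∈ spine G2 r e2s, ∀ f, AdjSup (G1 ⊔ G2) r e f → ¬ AdjSup G2 r e f →
      f ∈ spine G1 r e1s) := by
  refine ⟨fun e he f hsup hnot => ?_, fun e he f hsup hnot => ?_⟩
  · exact mem_spine_of_adjSup_sup_of_not_adjSup h2 hsupp.subset hdisj
      (hr.mono (edgeSet_mono le_sup_right)) he2.1 he2.2.1 he2.2.2
      (spine_subset_edgeSet he1.1 he) hsup hnot
  · rw [sup_comm] at hsup
    exact mem_spine_of_adjSup_sup_of_not_adjSup h1 (Set.inter_comm G1.support _ ▸ hsupp).subset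
      hdisj.symm (hr.mono (edgeSet_mono le_sup_left)) he1.1 he1.2.1 he1.2.2
      (spine_subset_edgeSet he2.1 he) hsup hnot
end

section
/- (Invariance off the characteristic spine; proved within Lemma 3.4.) For every edge f ∈ E1 with f ∉ spine1(e1*), the adjacent superiors and adjacent inferiors of f are unchanged by the merge: S_G(f) = S_{G1}(f) and I_G(f) = I_{G1}(f), where the subscript indicates in which tree the notion is computed. Symmetrically for f ∈ E2 with f ∉ spine2(e2*). -/
/- Single tree setting: `G` is a finite tree with injective edge ranks `r`.
`edgesBetween G e f` is the set of edges strictly between edges `e` and `f`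
on the unique tree path connecting them (an edge `g ∉ {e,f}` lies on this path
iff it belongs to every walk containing both `e` and `f`). -/

open SimpleGraph

variable {V : Type*}

/-! An edge `g` of `G₂` is never an adjacent superior or inferior in `G₁ ⊔ G₂` of an edge `f` of
`G₁` off the spine of `e₁*`. The path from `f` to `g` runs through `v`, so it contains the
`G₁`-path from `f` to `e₁*` and an edge at `v`, of rank at least `r e₁*`; if all of these had rank
below `r f`, iterating the parent function from `e₁*` would reach `f`, since each parent has rank
at most `r f` and the edges between it and `f` stay below `r f`. For `g` in `G₁` nothing changes:
a walk of `G₁ ⊔ G₂` can leave `G₁` only at `v` and must return there, so the edges between `f`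
and `g` are the same in `G₁ ⊔ G₂` as in `G₁`. -/

namespace SimpleGraph

variable {T : SimpleGraph V}

lemma isAcyclic_of_isAcyclic_induce_support_s10 (h : (T.induce T.support).IsAcyclic) :
    T.IsAcyclic := by
  intro u c hc
  have hs : ∀ x ∈ c.support, x ∈ T.support := fun x hx =>
    mem_support_of_mem_walk_support c hc.not_nil hx
  have hinj := (Embedding.induce (G := T) T.support).injective
  exact h (c.induce _ hs) ((Walk.isCycle_map_iff_of_injective hinj).mp (by rwa [Walk.map_induce]))

lemma reachable_of_connected_induce_support_s10 (h : (T.induce T.support).Connected) {a b : V}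
    (ha : a ∈ T.support) (hb : b ∈ T.support) : T.Reachable a b :=
  (h ⟨a, ha⟩ ⟨b, hb⟩).map (Embedding.induce _).toHom

lemma IsAcyclic.exists_adj_forall_walk_mem_edges (hT : T.IsAcyclic) {a b : V}
    (hab : T.Reachable a b) (hne : a ≠ b) :
    ∃ c, T.Adj a c ∧ ∀ w : T.Walk a b, s(a, c) ∈ w.edges := by
  classical
  obtain ⟨P, hP⟩ := hab.exists_isPath
  have hnil : ¬P.Nil := Walk.not_nil_of_ne hne
  refine ⟨P.snd, P.adj_snd hnil, fun w => ?_⟩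
  obtain rfl : P = w.bypass := congrArg Subtype.val
    ((hT.subsingleton_path a b).elim ⟨P, hP⟩ ⟨_, w.bypass_isPath⟩)
  exact w.edges_bypass_subset_edges (Walk.mk_start_snd_mem_edges hnil)

lemma Walk.exists_walk_edges_subset {a b c d : V} (w : T.Walk a b) (hc : c ∈ w.support)
    (hd : d ∈ w.support) : ∃ w' : T.Walk c d, w'.edges ⊆ w.edges := by
  classical
  refine ⟨(w.takeUntil c hc).reverse.append (w.takeUntil d hd), fun k hk => ?_⟩
  rw [edges_append, edges_reverse, List.mem_append, List.mem_reverse] at hk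
  exact hk.elim (w.edges_takeUntil_subset_edges hc ·) (w.edges_takeUntil_subset_edges hd ·)

lemma Walk.exists_walk_mem_edges_iff {a₁ b₁ a₂ b₂ x : V} (w₁ : T.Walk a₁ b₁) (w₂ : T.Walk a₂ b₂)
    (h₁ : x ∈ w₁.support) (h₂ : x ∈ w₂.support) :
    ∃ a b, ∃ W : T.Walk a b, ∀ k, k ∈ W.edges ↔ k ∈ w₁.edges ∨ k ∈ w₂.edges := by
  obtain ⟨u₁, hu₁⟩ := w₁.exists_walk_edges_subset w₁.end_mem_support h₁
  obtain ⟨u₂, hu₂⟩ := w₂.exists_walk_edges_subset h₂ w₂.start_mem_support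
  refine ⟨a₁, b₂, w₁.append (u₁.append (u₂.append w₂)), fun k => ?_⟩
  simp only [edges_append, List.mem_append]
  constructor
  · rintro (h | h | h | h)
    exacts [Or.inl h, Or.inl (hu₁ h), Or.inr (hu₂ h), Or.inr h]
  · rintro (h | h)
    exacts [Or.inl h, Or.inr (Or.inr (Or.inr h))]

/-- An edge at the end vertex of a path can only be its last edge. -/
lemma Walk.IsPath.exists_isPath_notMem_edges {x p q : V} {P : T.Walk x q} (hP : P.IsPath)
    (hpq : T.Adj p q) :
    ∃ a b, ∃ (_ : T.Adj a b) (P' : T.Walk x b),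
      s(a, b) = s(p, q) ∧ P'.IsPath ∧ s(p, q) ∉ P'.edges ∧ P'.edges ⊆ P.edges := by
  classical
  by_cases he : s(p, q) ∈ P.edges
  · have hp := P.fst_mem_support_of_mem_edges he
    have hq := endpoint_notMem_support_takeUntil hP hp hpq.ne'
    exact ⟨q, p, hpq.symm, P.takeUntil p hp, Sym2.eq_swap, hP.takeUntil hp,
      fun h => hq ((P.takeUntil p hp).snd_mem_support_of_mem_edges h),
      P.edges_takeUntil_subset_edges hp⟩
  · exact ⟨p, q, hpq, P, rfl, hP, he, List.Subset.refl _⟩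

end SimpleGraph

section EdgesBetween

variable {T : SimpleGraph V}

lemma edgesBetween_comm (e f : Sym2 V) : edgesBetween T e f = edgesBetween T f e := by
  ext k
  constructor <;>
    exact fun ⟨hk, hke, hkf, hkw⟩ => ⟨hk, hkf, hke, fun a b w h₁ h₂ => hkw a b w h₂ h₁⟩

lemma mem_edges_of_mem_edgesBetween {x y z t : V} {k : Sym2 V}
    (hk : k ∈ edgesBetween T s(x, y) s(z, t)) (hxy : T.Adj x y) (hzt : T.Adj z t)
    (P : T.Walk y z) : k ∈ P.edges := by
  have hkW := hk.2.2.2 _ _ (Walk.cons hxy (P.concat hzt)) (by simp) (by simp [Walk.edges_concat])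
  simp only [Walk.edges_cons, Walk.edges_concat, List.concat_eq_append, List.mem_cons,
    List.mem_append, List.not_mem_nil, or_false] at hkW
  rcases hkW with h | h | h
  exacts [absurd h hk.2.1, h, absurd h hk.2.2.1]

lemma edgesBetween_subset_union (g e f : Sym2 V) :
    edgesBetween T g f ⊆ edgesBetween T g e ∪ {e} ∪ edgesBetween T e f := by
  rintro k ⟨hk, hkg, hkf, hkw⟩
  by_contra hout
  simp only [Set.mem_union, Set.mem_singleton_iff, not_or] at hout
  obtain ⟨⟨hge, hke⟩, hef⟩ := hout
  obtain ⟨a₁, b₁, w₁, hg₁, he₁, hk₁⟩ :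
      ∃ a b, ∃ w : T.Walk a b, g ∈ w.edges ∧ e ∈ w.edges ∧ k ∉ w.edges := by
    by_contra! h
    exact hge ⟨hk, hkg, hke, h⟩
  obtain ⟨a₂, b₂, w₂, he₂, hf₂, hk₂⟩ :
      ∃ a b, ∃ w : T.Walk a b, e ∈ w.edges ∧ f ∈ w.edges ∧ k ∉ w.edges := by
    by_contra! h
    exact hef ⟨hk, hke, hkf, h⟩
  obtain ⟨a, b, W, hW⟩ := w₁.exists_walk_mem_edges_iff w₂
    (w₁.mem_support_of_mem_edges he₁ e.out_fst_mem) (w₂.mem_support_of_mem_edges he₂ e.out_fst_mem)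
  have hkW := hkw a b W ((hW g).2 (Or.inl hg₁)) ((hW f).2 (Or.inr hf₂))
  exact ((hW k).1 hkW).elim hk₁ hk₂

lemma edgesBetween_finite (hT : (T.induce T.support).Connected) {e f : Sym2 V}
    (he : e ∈ T.edgeSet) (hf : f ∈ T.edgeSet) : (edgesBetween T e f).Finite := by
  induction e with | h x y => induction f with | h z t =>
  obtain ⟨P⟩ := reachable_of_connected_induce_support_s10 hT he.right_mem_support hf.left_mem_support
  exact (List.finite_toSet P.edges).subset fun k hk => mem_edges_of_mem_edgesBetween hk he hf P

lemma exists_walk_joining_notMem_edges (hT : (T.induce T.support).Connected) {e f : Sym2 V}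
    (he : e ∈ T.edgeSet) (hf : f ∈ T.edgeSet) :
    ∃ a b c d, ∃ (_ : T.Adj a b) (_ : T.Adj c d) (P : T.Walk b c),
      e = s(a, b) ∧ f = s(c, d) ∧ e ∉ P.edges ∧ f ∉ P.edges := by
  classical
  induction e with | h p q => induction f with | h x y =>
  obtain ⟨P₀⟩ := reachable_of_connected_induce_support_s10 hT hf.right_mem_support he.right_mem_support
  obtain ⟨a, b, hab, P₁, hab_eq, hP₁, heP₁, -⟩ := P₀.bypass_isPath.exists_isPath_notMem_edges he
  obtain ⟨d, c, hdc, P₂, hdc_eq, -, hfP₂, hP₂₁⟩ := hP₁.reverse.exists_isPath_notMem_edges hf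
  refine ⟨a, b, c, d, hab, hdc.symm, P₂, hab_eq.symm, hdc_eq.symm.trans Sym2.eq_swap, ?_, hfP₂⟩
  intro h
  exact heP₁ (by simpa [Walk.edges_reverse] using hP₂₁ h)

lemma notMem_edgesBetween_of_mem_edgesBetween_s10 (hT : (T.induce T.support).Connected)
    {e f c : Sym2 V} (he : e ∈ T.edgeSet) (hc : c ∈ edgesBetween T e f) :
    f ∉ edgesBetween T e c := by
  intro hf
  obtain ⟨a, b, x, y, hab, hxy, P, rfl, rfl, -, hfP⟩ := exists_walk_joining_notMem_edges hT he hf.1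
  have hcP := mem_edges_of_mem_edgesBetween hc hab hxy P
  have hfW := hf.2.2.2 _ _ (Walk.cons hab P) (by simp) (by simp [hcP])
  rw [Walk.edges_cons, List.mem_cons] at hfW
  exact hfW.elim hf.2.1 hfP

lemma edgesBetween_subset_of_mem_s10 (hT : (T.induce T.support).Connected) {e f c : Sym2 V}
    (he : e ∈ T.edgeSet) (hc : c ∈ edgesBetween T e f) :
    edgesBetween T e c ⊆ edgesBetween T e f := fun _ hk =>
  ⟨hk.1, hk.2.1, fun hkf => notMem_edgesBetween_of_mem_edgesBetween_s10 hT he hc (hkf ▸ hk),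
    fun a b w hew hfw => hk.2.2.2 a b w hew (hc.2.2.2 a b w hew hfw)⟩

end EdgesBetween

section Spine

variable {T : SimpleGraph V} {r : Sym2 V → ℕ}

/-- Among `f` and the edges between `e` and `f` of rank above `r e`, one nearest to `e` (fewest
edges in between) is an adjacent superior of `e`. -/
lemma exists_adjSup_mem_edgesBetween (hT : (T.induce T.support).Connected)
    (hr : Set.InjOn r T.edgeSet) {e f : Sym2 V} (he : e ∈ T.edgeSet) (hf : f ∈ T.edgeSet)
    (hlt : r e < r f) : ∃ c, AdjSup T r e c ∧ (c = f ∨ c ∈ edgesBetween T e f) := by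
  induction hn : (edgesBetween T e f).ncard using Nat.strong_induction_on generalizing f with
  | _ n ih =>
  by_cases hclose : ∀ k ∈ edgesBetween T e f, r k < r e
  · exact ⟨f, ⟨hf, hlt, hclose⟩, Or.inl rfl⟩
  push Not at hclose
  obtain ⟨k, hk, hek⟩ := hclose
  have hek : r e < r k := hek.lt_of_ne fun h => hk.2.1 (hr hk.1 he h.symm)
  have hsub := edgesBetween_subset_of_mem_s10 hT he hk
  have hssub : edgesBetween T e k ⊂ edgesBetween T e f :=
    (Set.ssubset_iff_of_subset hsub).2 ⟨k, hk, fun h => h.2.2.1 rfl⟩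
  have hcard : (edgesBetween T e k).ncard < n :=
    hn ▸ Set.ncard_lt_ncard hssub (edgesBetween_finite hT he hf)
  obtain ⟨c, hc, hck⟩ := ih _ hcard hk.1 hek rfl
  exact ⟨c, hc, Or.inr (hck.elim (· ▸ hk) (hsub ·))⟩

lemma exists_isParent_le_s10 (hT : (T.induce T.support).Connected) (hr : Set.InjOn r T.edgeSet)
    {e f : Sym2 V} (he : e ∈ T.edgeSet) (hf : f ∈ T.edgeSet) (hlt : r e < r f)
    (hbet : ∀ k ∈ edgesBetween T e f, r k < r f) : ∃ p, IsParent T r e p ∧ r p ≤ r f := by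
  obtain ⟨c, hc, hcf⟩ := exists_adjSup_mem_edgesBetween hT hr he hf hlt
  obtain ⟨p, hp, hmin⟩ := (InvImage.wf r wellFounded_lt).has_min {g | AdjSup T r e g} ⟨c, hc⟩
  have hmin' : ∀ g, AdjSup T r e g → r p ≤ r g := fun g hg => not_lt.1 (hmin g hg)
  refine ⟨p, ⟨hp, hmin'⟩, (hmin' c hc).trans ?_⟩
  rcases hcf with rfl | hcf
  exacts [le_rfl, (hbet c hcf).le]

lemma mem_spine_of_forall_edgesBetween_lt_s10 (hT : (T.induce T.support).Connected)
    (hr : Set.InjOn r T.edgeSet) {e f : Sym2 V} (he : e ∈ T.edgeSet) (hf : f ∈ T.edgeSet)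
    (hlt : r e < r f) (hbet : ∀ k ∈ edgesBetween T e f, r k < r f) : f ∈ spine T r e := by
  induction hn : r f - r e using Nat.strong_induction_on generalizing e with
  | _ n ih =>
  obtain ⟨p, hp, hpf⟩ := exists_isParent_le_s10 hT hr he hf hlt hbet
  rcases eq_or_ne p f with rfl | hpf'
  · exact .single hp
  have hp_lt : r p < r f := hpf.lt_of_ne fun h => hpf' (hr hp.1.1 hf h)
  refine .head hp (ih (r f - r p) (by have := hp.1.2.1; omega) hp.1.1 hp_lt ?_ rfl)
  intro k hk
  rcases edgesBetween_subset_union p e f hk with (hk | rfl) | hk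
  · exact (hp.1.2.2 k (edgesBetween_comm p e ▸ hk)).trans hlt
  · exact hlt
  · exact hbet k hk

end Spine

section Merge

variable {G₁ G₂ : SimpleGraph V} {v : V}

/-- A walk of `G₁ ⊔ G₂` leaves `G₁` only for excursions into `G₂`, which start and end at the
common vertex `v`; dropping them leaves a walk of `G₁`. -/
lemma exists_walk_left_of_walk_sup_s10 (hsupp : G₁.support ∩ G₂.support = {v}) {a b c d : V}
    (w : (G₁ ⊔ G₂).Walk a b) (hc : c ∈ w.support) (hd : d ∈ w.support) (hd₁ : d ∈ G₁.support) :
    ∃ c', ∃ w₁ : G₁.Walk c' d, w₁.edges ⊆ w.edges ∧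
      (c ∈ G₁.support → c' = c) ∧ (c ∈ G₂.support → c' = v) := by
  have hv : ∀ x, x ∈ G₁.support → x ∈ G₂.support → x = v := fun x h₁ h₂ =>
    (hsupp ▸ ⟨h₁, h₂⟩ : x ∈ ({v} : Set V))
  obtain ⟨w', hw'⟩ := w.exists_walk_edges_subset hc hd
  suffices ∀ {a b : V} (w : (G₁ ⊔ G₂).Walk a b), b ∈ G₁.support →
      ∃ a', ∃ w₁ : G₁.Walk a' b, w₁.edges ⊆ w.edges ∧
        (a ∈ G₁.support → a' = a) ∧ (a ∈ G₂.support → a' = v) by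
    obtain ⟨c', w₁, hsub, h₁, h₂⟩ := this w' hd₁
    exact ⟨c', w₁, List.Subset.trans hsub hw', h₁, h₂⟩
  intro a b w hb
  induction w with
  | nil => exact ⟨_, .nil, by simp, fun _ => rfl, hv _ hb⟩
  | @cons a c b h w ih =>
    obtain ⟨c', w₁, hsub, hc₁, hc₂⟩ := ih hb
    rcases h with h | h
    · obtain rfl := hc₁ h.right_mem_support
      exact ⟨a, .cons h w₁, List.cons_subset_cons _ hsub, fun _ => rfl, hv a h.left_mem_support⟩
    · obtain rfl := hc₂ h.right_mem_support
      exact ⟨c', w₁, List.Subset.trans hsub (List.subset_cons_self _ _),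
        fun ha => (hv a ha h.left_mem_support).symm, fun _ => rfl⟩

lemma edgesBetween_sup_eq_s10 (h₁ : (G₁.induce G₁.support).Connected)
    (hsupp : G₁.support ∩ G₂.support = {v}) {f g : Sym2 V} (hf : f ∈ G₁.edgeSet)
    (hg : g ∈ G₁.edgeSet) : edgesBetween (G₁ ⊔ G₂) f g = edgesBetween G₁ f g := by
  induction f with | h x y => induction g with | h z t =>
  ext k
  constructor
  · intro hk
    obtain ⟨P⟩ := reachable_of_connected_induce_support_s10 h₁ hf.right_mem_support hg.left_mem_support
    have hkP := mem_edges_of_mem_edgesBetween hk (Or.inl hf) (Or.inl hg) (P.mapLe le_sup_left)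
    rw [Walk.edges_mapLe_eq_edges] at hkP
    refine ⟨P.edges_subset_edgeSet hkP, hk.2.1, hk.2.2.1, fun a b w hfw hgw => ?_⟩
    simpa [Walk.edges_mapLe_eq_edges] using hk.2.2.2 a b (w.mapLe le_sup_left)
      (by simpa [Walk.edges_mapLe_eq_edges]) (by simpa [Walk.edges_mapLe_eq_edges])
  · intro hk
    refine ⟨edgeSet_mono le_sup_left hk.1, hk.2.1, hk.2.2.1, fun a b w hfw hgw => ?_⟩
    obtain ⟨c', w₁, hsub, hc', -⟩ := exists_walk_left_of_walk_sup_s10 hsupp w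
      (w.snd_mem_support_of_mem_edges hfw) (w.fst_mem_support_of_mem_edges hgw) hg.left_mem_support
    obtain rfl := hc' hf.right_mem_support
    exact hsub (mem_edges_of_mem_edgesBetween hk hf hg w₁)

lemma mem_edgesBetween_sup_of_forall_walk_s10 (hsupp : G₁.support ∩ G₂.support = {v})
    (hdisj : Disjoint G₁.edgeSet G₂.edgeSet) {x y : V} {g k : Sym2 V} (hxy : G₁.Adj x y)
    (hg : g ∈ G₂.edgeSet) (hk : k ∈ G₁.edgeSet) (hkf : k ≠ s(x, y))
    (hkw : ∀ w : G₁.Walk v x, k ∈ w.edges) : k ∈ edgesBetween (G₁ ⊔ G₂) s(x, y) g := by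
  refine ⟨edgeSet_mono le_sup_left hk, hkf, fun hkg => Set.disjoint_left.mp hdisj hk (hkg ▸ hg),
    fun a b w hfw hgw => ?_⟩
  induction g with | h z t =>
  obtain ⟨c', w₁, hsub, -, hc'⟩ := exists_walk_left_of_walk_sup_s10 hsupp w
    (w.fst_mem_support_of_mem_edges hgw) (w.fst_mem_support_of_mem_edges hfw) hxy.left_mem_support
  obtain rfl := hc' hg.left_mem_support
  exact hsub (hkw w₁)

variable {r : Sym2 V → ℕ}

/-- The path from `f` to an edge of `G₂` runs through `v`, so it contains the path from `f` to `e`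
and an edge at `v`, of rank at least `r e`. -/
lemma mem_spine_of_forall_edgesBetween_sup_lt (h₁ : (G₁.induce G₁.support).IsTree)
    (hsupp : G₁.support ∩ G₂.support = {v}) (hdisj : Disjoint G₁.edgeSet G₂.edgeSet)
    (hr : Set.InjOn r G₁.edgeSet) {e f g : Sym2 V} (he : e ∈ G₁.edgeSet) (hve : v ∈ e)
    (hmin : ∀ f ∈ G₁.edgeSet, v ∈ f → r e ≤ r f) (hf : f ∈ G₁.edgeSet) (hg : g ∈ G₂.edgeSet)
    (hbet : ∀ k ∈ edgesBetween (G₁ ⊔ G₂) f g, r k < r f) : f ∈ spine G₁ r e := by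
  obtain ⟨u, rfl⟩ := Sym2.mem_iff_exists.mp hve
  induction f with | h x y =>
  rcases eq_or_ne s(x, y) s(v, u) with hfe | hfe
  · exact hfe ▸ .refl
  have hlt_of_walks : ∀ k ∈ G₁.edgeSet, k ≠ s(x, y) → (∀ w : G₁.Walk v x, k ∈ w.edges) →
      r k < r s(x, y) := fun k hk hkf hkw =>
    hbet k (mem_edgesBetween_sup_of_forall_walk_s10 hsupp hdisj hf hg hk hkf hkw)
  refine mem_spine_of_forall_edgesBetween_lt_s10 h₁.connected hr he hf ?_ fun k hk =>
    hlt_of_walks k hk.1 hk.2.2.1 fun w =>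
      mem_edges_of_mem_edgesBetween (Sym2.eq_swap (a := v) ▸ hk) he.symm hf w
  by_cases hvf : v ∈ s(x, y)
  · exact (hmin _ hf hvf).lt_of_ne fun h => hfe (hr hf he h.symm)
  have hvx : v ≠ x := fun h => hvf (h ▸ Sym2.mem_mk_left _ _)
  obtain ⟨c, hvc, hc⟩ :=
    (isAcyclic_of_isAcyclic_induce_support_s10 h₁.isAcyclic).exists_adj_forall_walk_mem_edges
      (reachable_of_connected_induce_support_s10 h₁.connected he.left_mem_support hf.left_mem_support)
      hvx
  calc r s(v, u) ≤ r s(v, c) := hmin _ hvc (Sym2.mem_mk_left _ _)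
    _ < r s(x, y) := hlt_of_walks _ hvc (fun h => hvf (h ▸ Sym2.mem_mk_left _ _)) hc

lemma mem_left_of_forall_edgesBetween_sup_lt (h₁ : (G₁.induce G₁.support).IsTree)
    (hsupp : G₁.support ∩ G₂.support = {v}) (hdisj : Disjoint G₁.edgeSet G₂.edgeSet)
    (hr : Set.InjOn r G₁.edgeSet) {e f g : Sym2 V} (he : e ∈ G₁.edgeSet) (hve : v ∈ e)
    (hmin : ∀ f ∈ G₁.edgeSet, v ∈ f → r e ≤ r f) (hf : f ∈ G₁.edgeSet)
    (hfs : f ∉ spine G₁ r e) (hg : g ∈ (G₁ ⊔ G₂).edgeSet)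
    (hbet : ∀ k ∈ edgesBetween (G₁ ⊔ G₂) f g, r k < r f) : g ∈ G₁.edgeSet := by
  rw [edgeSet_sup] at hg
  exact hg.resolve_right fun hg₂ =>
    hfs (mem_spine_of_forall_edgesBetween_sup_lt h₁ hsupp hdisj hr he hve hmin hf hg₂ hbet)

lemma adjSup_sup_iff_s10 (h₁ : (G₁.induce G₁.support).IsTree)
    (hsupp : G₁.support ∩ G₂.support = {v}) (hdisj : Disjoint G₁.edgeSet G₂.edgeSet)
    (hr : Set.InjOn r G₁.edgeSet) {e f : Sym2 V} (he : e ∈ G₁.edgeSet) (hve : v ∈ e)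
    (hmin : ∀ f ∈ G₁.edgeSet, v ∈ f → r e ≤ r f) (hf : f ∈ G₁.edgeSet)
    (hfs : f ∉ spine G₁ r e) (g : Sym2 V) : AdjSup (G₁ ⊔ G₂) r f g ↔ AdjSup G₁ r f g := by
  constructor
  · rintro ⟨hg, hlt, hbet⟩
    have hg₁ := mem_left_of_forall_edgesBetween_sup_lt h₁ hsupp hdisj hr he hve hmin hf hfs hg hbet
    exact ⟨hg₁, hlt, edgesBetween_sup_eq_s10 h₁.connected hsupp hf hg₁ ▸ hbet⟩
  · rintro ⟨hg, hlt, hbet⟩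
    exact ⟨edgeSet_mono le_sup_left hg, hlt, by rwa [edgesBetween_sup_eq_s10 h₁.connected hsupp hf hg]⟩

lemma adjInf_sup_iff (h₁ : (G₁.induce G₁.support).IsTree)
    (hsupp : G₁.support ∩ G₂.support = {v}) (hdisj : Disjoint G₁.edgeSet G₂.edgeSet)
    (hr : Set.InjOn r G₁.edgeSet) {e f : Sym2 V} (he : e ∈ G₁.edgeSet) (hve : v ∈ e)
    (hmin : ∀ f ∈ G₁.edgeSet, v ∈ f → r e ≤ r f) (hf : f ∈ G₁.edgeSet)
    (hfs : f ∉ spine G₁ r e) (g : Sym2 V) : AdjInf (G₁ ⊔ G₂) r f g ↔ AdjInf G₁ r f g := by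
  constructor
  · rintro ⟨hg, hlt, hbet⟩
    have hg₁ := mem_left_of_forall_edgesBetween_sup_lt h₁ hsupp hdisj hr he hve hmin hf hfs hg hbet
    exact ⟨hg₁, hlt, edgesBetween_sup_eq_s10 h₁.connected hsupp hf hg₁ ▸ hbet⟩
  · rintro ⟨hg, hlt, hbet⟩
    exact ⟨edgeSet_mono le_sup_left hg, hlt, by rwa [edgesBetween_sup_eq_s10 h₁.connected hsupp hf hg]⟩

end Merge

variable [Fintype V] (G1 G2 : SimpleGraph V) (v : V) (r : Sym2 V → ℕ)
  (e1s e2s : Sym2 V)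

theorem stmt10
    (h1 : (G1.induce G1.support).IsTree) (h2 : (G2.induce G2.support).IsTree)
    (hsupp : G1.support ∩ G2.support = {v})
    (hdisj : Disjoint G1.edgeSet G2.edgeSet)
    (hr : Set.InjOn r (G1 ⊔ G2).edgeSet)
    (he1 : e1s ∈ G1.edgeSet ∧ v ∈ e1s ∧ ∀ f ∈ G1.edgeSet, v ∈ f → r e1s ≤ r f)
    (he2 : e2s ∈ G2.edgeSet ∧ v ∈ e2s ∧ ∀ f ∈ G2.edgeSet, v ∈ f → r e2s ≤ r f) :
    (∀ f ∈ G1.edgeSet, f ∉ spine G1 r e1s →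
      (∀ g, AdjSup (G1 ⊔ G2) r f g ↔ AdjSup G1 r f g) ∧
      (∀ g, AdjInf (G1 ⊔ G2) r f g ↔ AdjInf G1 r f g)) ∧
    (∀ f ∈ G2.edgeSet, f ∉ spine G2 r e2s →
      (∀ g, AdjSup (G1 ⊔ G2) r f g ↔ AdjSup G2 r f g) ∧
      (∀ g, AdjInf (G1 ⊔ G2) r f g ↔ AdjInf G2 r f g)) := by
  obtain ⟨he1, hv1, hmin1⟩ := he1
  obtain ⟨he2, hv2, hmin2⟩ := he2
  have hr1 : Set.InjOn r G1.edgeSet := hr.mono (edgeSet_mono le_sup_left)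
  have hr2 : Set.InjOn r G2.edgeSet := hr.mono (edgeSet_mono le_sup_right)
  have hsupp' : G2.support ∩ G1.support = {v} := by rwa [Set.inter_comm]
  refine ⟨fun f hf hfs => ⟨adjSup_sup_iff_s10 h1 hsupp hdisj hr1 he1 hv1 hmin1 hf hfs,
    adjInf_sup_iff h1 hsupp hdisj hr1 he1 hv1 hmin1 hf hfs⟩, fun f hf hfs => ?_⟩
  rw [sup_comm G1 G2]
  exact ⟨adjSup_sup_iff_s10 h2 hsupp' hdisj.symm hr2 he2 hv2 hmin2 hf hfs,
    adjInf_sup_iff h2 hsupp' hdisj.symm hr2 he2 hv2 hmin2 hf hfs⟩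
end
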